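/- arXiv:2011.02994 — 5 statements merged into one kernel-verified Lean document; each statement's English description precedes it below -/
import Mathlib

section
/- Let d₁, d₂, M be positive integers with d₂M ≥ d₁, identify ℂ^{d₂M} ≅ ℂ^{d₂} ⊗ ℂ^{M}, and let G ∈ M_{d₂M×d₁}(ℂ) be such that G†G is invertible. Set V := G(G†G)^{-1/2} (an isometry) and define Kraus operators A_i := (𝟙_{d₂} ⊗ ⟨i|)V ∈ M_{d₂×d₁}(ℂ) for i = 1,…,M. Define G̃ ∈ M_{d₁d₂×M}(ℂ) by G̃_{(j,k),i} := G_{(j,i),k} for j ∈ {1,…,d₂}, k ∈ {1,…,d₁}, i ∈ {1,…,M} (rows of G indexed by pairs in {1,…,d₂}×{1,…,M}, rows of G̃ by pairs in {1,…,d₂}×{1,…,d₁}). Then: (i) [Tr_{d₂} ⊗ id_{d₁}](G̃G̃†) = Gᵀ Ḡ; and (ii) the Choi matrix of the channel with Kraus operators A_i satisfies Σ_{i=1}^M |A_i⟩⟩⟨⟨A_i| = (𝟙_{d₂} ⊗ (GᵀḠ)^{-1/2}) G̃G̃† (𝟙_{d₂} ⊗ (GᵀḠ)^{-1/2}). (This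 is the deterministic identity underlying the equality μ^{Stinespring}_{d₁,d₂;M} = μ^{Choi}_{d₁,d₂;M}.) -/
open Matrix
open scoped Kronecker ComplexOrder

noncomputable section

/-- The positive semidefinite square root of a positive semidefinite matrix
(the definition of `Matrix.PosSemidef.sqrt` in the older Mathlib, since removed). -/
def Matrix.PosSemidef.sqrt {n 𝕜 : Type*} [Fintype n] [DecidableEq n] [RCLike 𝕜]
    {A : Matrix n n 𝕜} (hA : A.PosSemidef) : Matrix n n 𝕜 :=
  hA.1.eigenvectorUnitary.1 * diagonal ((↑) ∘ (Real.sqrt ∘ hA.1.eigenvalues)) *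
  (star hA.1.eigenvectorUnitary : Matrix n n 𝕜)

/-- Vectorization of a rectangular matrix: `|A⟩⟩_{(j,i)} = A_{ji}`. -/
def vecOf {d₂ d₁ : ℕ} (A : Matrix (Fin d₂) (Fin d₁) ℂ) : Fin d₂ × Fin d₁ → ℂ :=
  fun p => A p.1 p.2

/-- Partial trace over the first tensor factor:
`([Tr_{d₂} ⊗ id_{d₁}]X)_{i,i'} = Σ_j X_{(j,i),(j,i')}`. -/
def ptrFirst {d₂ d₁ : ℕ} (X : Matrix (Fin d₂ × Fin d₁) (Fin d₂ × Fin d₁) ℂ) :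
    Matrix (Fin d₁) (Fin d₁) ℂ :=
  Matrix.of fun i i' => ∑ j : Fin d₂, X (j, i) (j, i')

/-! Reshuffling turns right multiplication by `B` into left multiplication by `𝟙 ⊗ Bᵀ`. With
`S = (G†G)^{1/2}`, the reshuffle of the Stinespring isometry `V = G S⁻¹` is therefore
`(𝟙 ⊗ (S⁻¹)ᵀ) G̃`, and the Choi matrix is this reshuffle times its adjoint. Since
`GᵀḠ = (G†G)ᵀ`, its square root is `Sᵀ`, and `(S⁻¹)ᵀ` is Hermitian. -/

namespace Matrix.PosSemidef

variable {n 𝕜 : Type*} [Fintype n] [DecidableEq n] [RCLike 𝕜]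

open scoped MatrixOrder

theorem sqrt_eq_cfcSqrt {A : Matrix n n 𝕜} (hA : A.PosSemidef) : hA.sqrt = CFC.sqrt A := by
  rw [CFC.sqrt_eq_real_sqrt A hA.nonneg, cfcₙ_eq_cfc, hA.1.cfc_eq]
  rfl

theorem posSemidef_sqrt {A : Matrix n n 𝕜} (hA : A.PosSemidef) : hA.sqrt.PosSemidef := by
  rw [hA.sqrt_eq_cfcSqrt]
  exact (CFC.sqrt_nonneg A).posSemidef

theorem sqrt_transpose {A B : Matrix n n 𝕜} (hA : A.PosSemidef) (hB : B.PosSemidef)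
    (hBA : B = Aᵀ) : hB.sqrt = hA.sqrtᵀ := by
  subst hBA
  rw [hB.sqrt_eq_cfcSqrt]
  refine CFC.sqrt_unique ?_ hA.posSemidef_sqrt.transpose.nonneg
  rw [← transpose_mul, hA.sqrt_eq_cfcSqrt, CFC.sqrt_mul_sqrt_self A hA.nonneg]

end Matrix.PosSemidef

namespace Matrix

variable {α β γ δ R : Type*}

/-- The realignment `G̃_{(j,k),i} = G_{(j,i),k}`. -/
def reshuffle (G : Matrix (α × β) γ R) : Matrix (α × γ) β R :=
  of fun p i => G (p.1, i) p.2

theorem reshuffle_mul [Fintype α] [Fintype γ] [DecidableEq α] [CommSemiring R]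
    (G : Matrix (α × β) γ R) (B : Matrix γ δ R) :
    reshuffle (G * B) = ((1 : Matrix α α R) ⊗ₖ Bᵀ) * reshuffle G := by
  ext ⟨j, k⟩ i
  simp [reshuffle, mul_apply, one_apply, Fintype.sum_prod_type, mul_comm]

theorem mul_conjTranspose_eq_sum_vecMulVec [Fintype β] [NonUnitalNonAssocSemiring R] [Star R]
    (X : Matrix α β R) : X * Xᴴ = ∑ i, vecMulVec (X.col i) (star (X.col i)) := by
  ext a b
  simp [mul_apply, vecMulVec_apply, Matrix.sum_apply]

end Matrix

theorem ptrFirst_reshuffle_mul_conjTranspose {d₁ d₂ : ℕ} {ι : Type*} [Fintype ι]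
    (G : Matrix (Fin d₂ × ι) (Fin d₁) ℂ) :
    ptrFirst (reshuffle G * (reshuffle G)ᴴ) = Gᵀ * G.map (starRingEnd ℂ) := by
  ext k k'
  simp [ptrFirst, reshuffle, mul_apply, Fintype.sum_prod_type]

theorem stinespring_choi_identity_general (d₁ d₂ M : ℕ)
    (G : Matrix (Fin d₂ × Fin M) (Fin d₁) ℂ)
    (hTpsd : (Gᵀ * G.map (starRingEnd ℂ)).PosSemidef)
    (V : Matrix (Fin d₂ × Fin M) (Fin d₁) ℂ)
    (hV : V = G * ((Matrix.posSemidef_conjTranspose_mul_self G).sqrt)⁻¹)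
    (A : Fin M → Matrix (Fin d₂) (Fin d₁) ℂ)
    (hA : ∀ i, A i = Matrix.of fun j k => V (j, i) k)
    (Gt : Matrix (Fin d₂ × Fin d₁) (Fin M) ℂ)
    (hGt : Gt = Matrix.of fun p i => G (p.1, i) p.2) :
    ptrFirst (Gt * Gtᴴ) = Gᵀ * G.map (starRingEnd ℂ) ∧
    (∑ i, vecMulVec (vecOf (A i)) (star (vecOf (A i)))) =
      ((1 : Matrix (Fin d₂) (Fin d₂) ℂ) ⊗ₖ (hTpsd.sqrt)⁻¹) * (Gt * Gtᴴ) *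
        ((1 : Matrix (Fin d₂) (Fin d₂) ℂ) ⊗ₖ (hTpsd.sqrt)⁻¹) := by
  set hS := posSemidef_conjTranspose_mul_self G
  have hvec : ∀ i, vecOf (A i) = (reshuffle V).col i := fun i => by rw [hA]; rfl
  have hTinv : hTpsd.sqrt⁻¹ = (hS.sqrt⁻¹)ᵀ := by
    rw [hS.sqrt_transpose hTpsd (by rw [transpose_mul]; rfl), transpose_nonsing_inv]
  have hK : ((1 : Matrix (Fin d₂) (Fin d₂) ℂ) ⊗ₖ (hS.sqrt⁻¹)ᵀ)ᴴ = 1 ⊗ₖ (hS.sqrt⁻¹)ᵀ := by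
    rw [conjTranspose_kronecker, conjTranspose_one, hS.posSemidef_sqrt.1.inv.transpose.eq]
  obtain rfl : Gt = reshuffle G := hGt
  refine ⟨ptrFirst_reshuffle_mul_conjTranspose G, ?_⟩
  simp only [hvec, ← mul_conjTranspose_eq_sum_vecMulVec]
  rw [hV, reshuffle_mul, conjTranspose_mul, hK, hTinv]
  simp only [Matrix.mul_assoc]

/-- The deterministic identity underlying `μ^{Stinespring} = μ^{Choi}`: with
`V = G(G†G)^{-1/2}`, Kraus operators `A_i = (𝟙_{d₂} ⊗ ⟨i|)V`, and
`G̃_{(j,k),i} = G_{(j,i),k}`, one has `[Tr_{d₂} ⊗ id](G̃G̃†) = Gᵀ Ḡ` and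
`Σ |A_i⟩⟩⟨⟨A_i| = (𝟙 ⊗ (GᵀḠ)^{-1/2}) G̃G̃† (𝟙 ⊗ (GᵀḠ)^{-1/2})`. -/
theorem stinespring_choi_identity (d₁ d₂ M : ℕ) (hd₁ : 0 < d₁) (hd₂ : 0 < d₂) (hM : 0 < M)
    (hdim : d₁ ≤ d₂ * M)
    (G : Matrix (Fin d₂ × Fin M) (Fin d₁) ℂ)
    (hinv : IsUnit (Gᴴ * G).det)
    (hTpsd : (Gᵀ * G.map (starRingEnd ℂ)).PosSemidef)
    (V : Matrix (Fin d₂ × Fin M) (Fin d₁) ℂ)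
    (hV : V = G * ((Matrix.posSemidef_conjTranspose_mul_self G).sqrt)⁻¹)
    (A : Fin M → Matrix (Fin d₂) (Fin d₁) ℂ)
    (hA : ∀ i, A i = Matrix.of fun j k => V (j, i) k)
    (Gt : Matrix (Fin d₂ × Fin d₁) (Fin M) ℂ)
    (hGt : Gt = Matrix.of fun p i => G (p.1, i) p.2) :
    ptrFirst (Gt * Gtᴴ) = Gᵀ * G.map (starRingEnd ℂ) ∧
    (∑ i, vecMulVec (vecOf (A i)) (star (vecOf (A i)))) =
      ((1 : Matrix (Fin d₂) (Fin d₂) ℂ) ⊗ₖ (hTpsd.sqrt)⁻¹) * (Gt * Gtᴴ) *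
        ((1 : Matrix (Fin d₂) (Fin d₂) ℂ) ⊗ₖ (hTpsd.sqrt)⁻¹) :=
  stinespring_choi_identity_general d₁ d₂ M G hTpsd V hV A hA Gt hGt
end
end

section
/- Let d₁, d₂, M be positive integers with d₂M ≥ max(d₁, 2). With U Haar-distributed on U(d₂M), V_U the first d₁ columns of U, and Φ_U(X) = Tr_M(V_U X V_U†), the following holds for all matrices A, B ∈ M_{d₁}(ℂ): ∫_{U(d₂M)} Tr(Φ_U(A) Φ_U(B)) dμ(U) = [ (Tr A)(Tr B) · d₂(M² − 1) + Tr(AB) · M(d₂² − 1) ] / ((d₂M)² − 1). -/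
open Matrix MeasureTheory
open scoped Kronecker

noncomputable section

open ComplexConjugate

instance matrixMeasurableSpace {m n : Type*} : MeasurableSpace (Matrix m n ℂ) :=
  inferInstanceAs (MeasurableSpace (m → n → ℂ))

set_option linter.unusedSectionVars false
set_option linter.unusedVariables false

namespace Wg

lemma norm_conj' (z : ℂ) : ‖conj z‖ = ‖z‖ := by
  rw [starRingEnd_apply, norm_star]

variable {ι : Type*} [Fintype ι] [DecidableEq ι]

def ent (p i : ι) (U : Matrix.unitaryGroup ι ℂ) : ℂ := (U : Matrix ι ι ℂ) p i

def m2 (p i q j : ι) (U : Matrix.unitaryGroup ι ℂ) : ℂ :=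
  ent p i U * conj (ent q j U)

def m4 (p i q j r l s m : ι) (U : Matrix.unitaryGroup ι ℂ) : ℂ :=
  m2 p i q j U * m2 r l s m U

lemma meas_ent (p i : ι) : Measurable (ent p i) := by
  have h1 : Measurable (fun U : Matrix.unitaryGroup ι ℂ => (U : Matrix ι ι ℂ)) :=
    measurable_subtype_coe
  exact (measurable_pi_apply i).comp ((measurable_pi_apply p).comp h1)

lemma meas_m2 (p i q j : ι) : Measurable (m2 p i q j) :=
  (meas_ent p i).mul (Complex.continuous_conj.measurable.comp (meas_ent q j))

lemma meas_m4 (p i q j r l s m : ι) : Measurable (m4 p i q j r l s m) :=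
  (meas_m2 p i q j).mul (meas_m2 r l s m)

lemma ent_norm_le (p i : ι) (U : Matrix.unitaryGroup ι ℂ) : ‖ent p i U‖ ≤ 1 := by
  have h : (star (U : Matrix ι ι ℂ) * (U : Matrix ι ι ℂ)) i i = (1 : Matrix ι ι ℂ) i i := by
    rw [Matrix.UnitaryGroup.star_mul_self]
  rw [Matrix.mul_apply, Matrix.one_apply_eq] at h
  have h2 : ∀ p' : ι, (star (U : Matrix ι ι ℂ)) i p' * (U : Matrix ι ι ℂ) p' i
      = (Complex.normSq ((U : Matrix ι ι ℂ) p' i) : ℂ) := by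
    intro p'
    rw [Matrix.star_apply, ← starRingEnd_apply, ← Complex.normSq_eq_conj_mul_self]
  simp only [h2] at h
  have h3 : ∑ p' : ι, Complex.normSq ((U : Matrix ι ι ℂ) p' i) = 1 := by
    exact_mod_cast h
  have h4 : Complex.normSq ((U : Matrix ι ι ℂ) p i) ≤ 1 := by
    rw [← h3]
    exact Finset.single_le_sum
      (f := fun q => Complex.normSq ((U : Matrix ι ι ℂ) q i))
      (fun q _ => Complex.normSq_nonneg _) (Finset.mem_univ p)
  have h5 : ‖ent p i U‖ ^ 2 = Complex.normSq ((U : Matrix ι ι ℂ) p i) := by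
    rw [ent, ← Complex.sq_norm]
  nlinarith [norm_nonneg (ent p i U)]

lemma m2_norm_le (p i q j : ι) (U : Matrix.unitaryGroup ι ℂ) : ‖m2 p i q j U‖ ≤ 1 := by
  have : m2 p i q j U = ent p i U * conj (ent q j U) := rfl
  rw [this, norm_mul]
  have h1 := ent_norm_le p i U
  have h2 : ‖conj (ent q j U)‖ ≤ 1 := by rw [norm_conj']; exact ent_norm_le q j U
  have := norm_nonneg (ent p i U)
  have := norm_nonneg (conj (ent q j U))
  nlinarith

lemma m4_norm_le (p i q j r l s m : ι) (U : Matrix.unitaryGroup ι ℂ) :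
    ‖m4 p i q j r l s m U‖ ≤ 1 := by
  have : m4 p i q j r l s m U = m2 p i q j U * m2 r l s m U := rfl
  rw [this, norm_mul]
  have h1 := m2_norm_le p i q j U
  have h2 := m2_norm_le r l s m U
  have := norm_nonneg (m2 p i q j U)
  have := norm_nonneg (m2 r l s m U)
  nlinarith

variable (μ : Measure (Matrix.unitaryGroup ι ℂ)) [IsProbabilityMeasure μ]

lemma integrable_m4 (p i q j r l s m : ι) : Integrable (m4 p i q j r l s m) μ :=
  (integrable_const (1:ℝ)).mono' (meas_m4 p i q j r l s m).aestronglyMeasurable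
    (Filter.Eventually.of_forall (m4_norm_le p i q j r l s m))

lemma integrable_m2 (p i q j : ι) : Integrable (m2 p i q j) μ :=
  (integrable_const (1:ℝ)).mono' (meas_m2 p i q j).aestronglyMeasurable
    (Filter.Eventually.of_forall (m2_norm_le p i q j))

def I2 (p i q j : ι) : ℂ := ∫ U, m2 p i q j U ∂μ
def I4 (p i q j r l s m : ι) : ℂ := ∫ U, m4 p i q j r l s m U ∂μ


lemma sum_two {a b : ι} (hab : a ≠ b) (c d : ℂ) (f : ι → ℂ) :
    ∑ p, (if p = a then c else if p = b then d else 0) * f p = c * f a + d * f b := by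
  have key : ∀ p, (if p = a then c else if p = b then d else 0) * f p
      = (if p = a then c * f p else 0) + (if p = b then d * f p else 0) := by
    intro p
    by_cases h1 : p = a <;> by_cases h2 : p = b
    · exact absurd (h1 ▸ h2) hab
    · simp [h1, h2, hab]
    · simp [h1, h2, hab.symm]
    · simp [h1, h2]
  simp only [key, Finset.sum_add_distrib]
  rw [Finset.sum_ite_eq' Finset.univ a, Finset.sum_ite_eq' Finset.univ b]
  simp

lemma exists_perm_two {a b c d : ι} (hab : a ≠ b) (hcd : c ≠ d) :
    ∃ σ : Equiv.Perm ι, σ a = c ∧ σ b = d := by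
  have h2 : c ≠ Equiv.swap a c b := by
    by_cases hbc : b = c
    · subst hbc
      rw [Equiv.swap_apply_right]
      exact fun h => hab h.symm
    · rw [Equiv.swap_apply_of_ne_of_ne (fun h => hab h.symm) hbc]
      exact Ne.symm hbc
  refine ⟨(Equiv.swap (Equiv.swap a c b) d) * (Equiv.swap a c), ?_, ?_⟩
  · rw [Equiv.Perm.mul_apply, Equiv.swap_apply_left,
      Equiv.swap_apply_of_ne_of_ne h2 hcd]
  · rw [Equiv.Perm.mul_apply]
    exact Equiv.swap_apply_left _ d

/-- diagonal phase unitary -/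
def phaseD (t : ι) : ι → ℂ := fun p => if p = t then Complex.I else 1

lemma phase_mem (t : ι) : Matrix.diagonal (phaseD t) ∈ Matrix.unitaryGroup ι ℂ := by
  rw [Matrix.mem_unitaryGroup_iff, Matrix.star_eq_conjTranspose, Matrix.diagonal_conjTranspose,
    Matrix.diagonal_mul_diagonal]
  have : (fun i => phaseD t i * star (phaseD t) i) = fun _ => (1 : ℂ) := by
    funext p
    simp only [Pi.star_apply, phaseD]
    by_cases hp : p = t
    · simp [hp, ← starRingEnd_apply, Complex.conj_I, mul_neg, Complex.I_mul_I]
    · simp [hp]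
  rw [this, Matrix.diagonal_one]

def phaseU (t : ι) : Matrix.unitaryGroup ι ℂ := ⟨Matrix.diagonal (phaseD t), phase_mem t⟩

lemma phaseU_mul_apply (t : ι) (U : Matrix.unitaryGroup ι ℂ) (p i : ι) :
    ((phaseU t * U : Matrix.unitaryGroup ι ℂ) : Matrix ι ι ℂ) p i
      = phaseD t p * (U : Matrix ι ι ℂ) p i := by
  show (Matrix.diagonal (phaseD t) * (U : Matrix ι ι ℂ)) p i = _
  rw [Matrix.diagonal_mul]

/-- permutation unitary -/
def permM (σ : Equiv.Perm ι) : Matrix ι ι ℂ := Matrix.of fun p p' => if p' = σ p then 1 else 0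

lemma perm_mem (σ : Equiv.Perm ι) : permM σ ∈ Matrix.unitaryGroup ι ℂ := by
  rw [Matrix.mem_unitaryGroup_iff]
  ext a b
  rw [Matrix.mul_apply]
  simp only [permM, Matrix.star_apply, Matrix.of_apply, apply_ite (star : ℂ → ℂ),
    star_one, star_zero, ite_mul, one_mul, zero_mul]
  rw [Finset.sum_ite_eq' Finset.univ (σ a) (fun x => if x = σ b then (1:ℂ) else 0)]
  simp [Matrix.one_apply, σ.injective.eq_iff]

def permU (σ : Equiv.Perm ι) : Matrix.unitaryGroup ι ℂ := ⟨permM σ, perm_mem σ⟩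

lemma permU_mul_apply (σ : Equiv.Perm ι) (U : Matrix.unitaryGroup ι ℂ) (p i : ι) :
    ((permU σ * U : Matrix.unitaryGroup ι ℂ) : Matrix ι ι ℂ) p i
      = (U : Matrix ι ι ℂ) (σ p) i := by
  show (permM σ * (U : Matrix ι ι ℂ)) p i = _
  rw [Matrix.mul_apply]
  simp only [permM, Matrix.of_apply, ite_mul, one_mul, zero_mul]
  rw [Finset.sum_ite_eq' Finset.univ (σ p) (fun p' => (U : Matrix ι ι ℂ) p' i)]
  simp

/-- 2×2 Hadamard-type unitary supported on t,t' -/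
def s2 : ℝ := (Real.sqrt 2)⁻¹

lemma s2_sq : (s2 : ℂ) * (s2 : ℂ) = 1/2 := by
  have h : Real.sqrt 2 * Real.sqrt 2 = 2 := Real.mul_self_sqrt (by norm_num)
  have : ((s2:ℂ)) * s2 = (((s2 * s2 : ℝ)) : ℂ) := by push_cast; ring
  rw [this, s2, ← mul_inv, h]
  norm_num

def hadM (t t' : ι) : Matrix ι ι ℂ := Matrix.of fun p q =>
  if p = t then (if q = t then (s2:ℂ) else if q = t' then (s2:ℂ) else 0)
  else if p = t' then (if q = t then (s2:ℂ) else if q = t' then -(s2:ℂ) else 0)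
  else if q = p then 1 else 0

lemma hadM_row_t (t t' : ι) :
    ∀ q, hadM t t' t q = if q = t then (s2:ℂ) else if q = t' then (s2:ℂ) else 0 := by
  intro q; simp [hadM]

lemma hadM_row_t' (t t' : ι) (ht : t ≠ t') :
    ∀ q, hadM t t' t' q = if q = t then (s2:ℂ) else if q = t' then -(s2:ℂ) else 0 := by
  intro q; simp [hadM, Ne.symm ht]

lemma hadM_row_other (t t' p : ι) (hp : p ≠ t) (hp' : p ≠ t') :
    ∀ q, hadM t t' p q = if q = p then 1 else 0 := by
  intro q; simp [hadM, hp, hp']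

lemma hadM_symm (t t' : ι) (ht : t ≠ t') (p q : ι) : hadM t t' p q = hadM t t' q p := by
  by_cases hp : p = t
  · subst hp
    by_cases hq : q = p
    · subst hq; rfl
    · by_cases hq' : q = t'
      · subst hq'; simp [hadM, ht, Ne.symm ht]
      · have hpq : ¬ p = q := fun h => hq h.symm
        simp [hadM, hq, hq', hpq]
  · by_cases hp' : p = t'
    · subst hp'
      by_cases hq : q = t
      · subst hq; simp [hadM, ht, Ne.symm ht]
      · by_cases hq' : q = p
        · subst hq'; rfl
        · have hpq : ¬ p = q := fun h => hq' h.symm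
          simp [hadM, hq, hq', hpq]
    · by_cases hq : q = t
      · subst hq
        have hqp : ¬ q = p := fun h => hp h.symm
        simp [hadM, hp, hp', hqp]
      · by_cases hq' : q = t'
        · subst hq'
          have hqp : ¬ q = p := fun h => hp' h.symm
          simp [hadM, hp, hp', hqp]
        · by_cases hpq : p = q
          · subst hpq; rfl
          · have hqp : ¬ q = p := fun h => hpq h.symm
            simp [hadM, hp, hp', hq, hq', hpq, hqp]

lemma hadM_real_entry (t t' p q : ι) : star (hadM t t' p q) = hadM t t' p q := by
  simp only [hadM, Matrix.of_apply]
  split_ifs <;>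
    simp only [← starRingEnd_apply, _root_.map_zero, _root_.map_one, _root_.map_neg, Complex.conj_ofReal]

lemma hadM_herm (t t' : ι) (ht : t ≠ t') : star (hadM t t') = hadM t t' := by
  rw [Matrix.star_eq_conjTranspose]
  ext p q
  rw [Matrix.conjTranspose_apply, hadM_symm t t' ht q p]
  exact hadM_real_entry t t' p q

lemma hadM_mul_self (t t' : ι) (ht : t ≠ t') : hadM t t' * hadM t t' = 1 := by
  ext x y
  rw [Matrix.mul_apply]
  by_cases hx : x = t
  · rw [hx]
    simp only [hadM_row_t t t']
    rw [sum_two ht _ _ (fun p => hadM t t' p y), hadM_row_t t t' y, hadM_row_t' t t' ht y,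
      Matrix.one_apply]
    split_ifs <;> first | linear_combination 2 * s2_sq | ring1 | (exfalso; simp_all)
  · by_cases hx' : x = t'
    · rw [hx']
      simp only [hadM_row_t' t t' ht]
      rw [sum_two ht _ _ (fun p => hadM t t' p y), hadM_row_t t t' y, hadM_row_t' t t' ht y,
        Matrix.one_apply]
      split_ifs <;> first | linear_combination 2 * s2_sq | ring1 | (exfalso; simp_all)
    · simp only [hadM_row_other t t' x hx hx', ite_mul, one_mul, zero_mul]
      rw [Finset.sum_ite_eq' Finset.univ x (fun p => hadM t t' p y),
        if_pos (Finset.mem_univ x), hadM_row_other t t' x hx hx' y, Matrix.one_apply]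
      split_ifs <;> first | rfl | (exfalso; simp_all)

lemma had_mem (t t' : ι) (ht : t ≠ t') : hadM t t' ∈ Matrix.unitaryGroup ι ℂ := by
  have h := hadM_mul_self t t' ht
  constructor
  · rw [hadM_herm t t' ht]; exact h
  · rw [hadM_herm t t' ht]; exact h

def hadU (t t' : ι) (ht : t ≠ t') : Matrix.unitaryGroup ι ℂ := ⟨hadM t t', had_mem t t' ht⟩

lemma hadU_mul_apply_t (t t' : ι) (ht : t ≠ t') (U : Matrix.unitaryGroup ι ℂ) (i : ι) :
    ((hadU t t' ht * U : Matrix.unitaryGroup ι ℂ) : Matrix ι ι ℂ) t i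
      = (s2:ℂ) * ((U : Matrix ι ι ℂ) t i + (U : Matrix ι ι ℂ) t' i) := by
  show (hadM t t' * (U : Matrix ι ι ℂ)) t i = _
  rw [Matrix.mul_apply]
  simp only [hadM_row_t t t']
  rw [sum_two ht _ _ (fun p => (U : Matrix ι ι ℂ) p i)]
  ring



-- ============ invariance machinery ============

lemma meas_mul_left (g : Matrix.unitaryGroup ι ℂ) :
    Measurable (fun x : Matrix.unitaryGroup ι ℂ => g * x) := by
  have h : Measurable (fun x : Matrix.unitaryGroup ι ℂ =>
      ((g : Matrix ι ι ℂ) * (x : Matrix ι ι ℂ))) := by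
    apply measurable_pi_lambda
    intro p
    apply measurable_pi_lambda
    intro i
    simp only [Matrix.mul_apply]
    apply Finset.measurable_sum
    intro k _
    exact (meas_ent k i).const_mul _
  exact h.subtype_mk

lemma int_inv (hμ : ∀ g : Matrix.unitaryGroup ι ℂ, μ.map (fun x => g * x) = μ)
    (g : Matrix.unitaryGroup ι ℂ) {f : Matrix.unitaryGroup ι ℂ → ℂ} (hf : Measurable f) :
    ∫ U, f (g * U) ∂μ = ∫ U, f U ∂μ := by
  have h1 : ∫ U, f U ∂μ = ∫ U, f U ∂(μ.map (fun x => g * x)) := by rw [hμ g]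
  rw [h1, integral_map (meas_mul_left g).aemeasurable hf.aestronglyMeasurable]

lemma eq_mul_self_zero {c z : ℂ} (h : z = c * z) (hc : c ≠ 1) : z = 0 := by
  have h1 : (c - 1) * z = 0 := by linear_combination -h
  rcases mul_eq_zero.mp h1 with h2 | h2
  · exact absurd (by linear_combination h2) hc
  · exact h2

lemma I4_phase (hμ : ∀ g : Matrix.unitaryGroup ι ℂ, μ.map (fun x => g * x) = μ) (t p i q j r l s m : ι) :
    I4 μ p i q j r l s m
      = phaseD t p * conj (phaseD t q) * (phaseD t r * conj (phaseD t s))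
        * I4 μ p i q j r l s m := by
  have hpt : ∀ U, m4 p i q j r l s m (phaseU t * U)
      = phaseD t p * conj (phaseD t q) * (phaseD t r * conj (phaseD t s))
        * m4 p i q j r l s m U := by
    intro U
    simp only [m4, m2, ent]
    rw [phaseU_mul_apply, phaseU_mul_apply, phaseU_mul_apply, phaseU_mul_apply,
      _root_.map_mul, _root_.map_mul]
    ring
  calc I4 μ p i q j r l s m
      = ∫ U, m4 p i q j r l s m (phaseU t * U) ∂μ :=
        (int_inv μ hμ (phaseU t) (meas_m4 p i q j r l s m)).symm
    _ = ∫ U, phaseD t p * conj (phaseD t q) * (phaseD t r * conj (phaseD t s))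
          * m4 p i q j r l s m U ∂μ := by simp only [hpt]
    _ = _ := integral_const_mul _ _

lemma I2_phase (hμ : ∀ g : Matrix.unitaryGroup ι ℂ, μ.map (fun x => g * x) = μ) (t p i q j : ι) :
    I2 μ p i q j = phaseD t p * conj (phaseD t q) * I2 μ p i q j := by
  have hpt : ∀ U, m2 p i q j (phaseU t * U)
      = phaseD t p * conj (phaseD t q) * m2 p i q j U := by
    intro U
    simp only [m2, ent]
    rw [phaseU_mul_apply, phaseU_mul_apply, _root_.map_mul]
    ring
  calc I2 μ p i q j
      = ∫ U, m2 p i q j (phaseU t * U) ∂μ :=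
        (int_inv μ hμ (phaseU t) (meas_m2 p i q j)).symm
    _ = ∫ U, phaseD t p * conj (phaseD t q) * m2 p i q j U ∂μ := by simp only [hpt]
    _ = _ := integral_const_mul _ _

lemma I4_perm (hμ : ∀ g : Matrix.unitaryGroup ι ℂ, μ.map (fun x => g * x) = μ) (σ : Equiv.Perm ι) (p i q j r l s m : ι) :
    I4 μ p i q j r l s m = I4 μ (σ p) i (σ q) j (σ r) l (σ s) m := by
  have hpt : ∀ U, m4 p i q j r l s m (permU σ * U)
      = m4 (σ p) i (σ q) j (σ r) l (σ s) m U := by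
    intro U
    simp only [m4, m2, ent]
    rw [permU_mul_apply, permU_mul_apply, permU_mul_apply, permU_mul_apply]
  calc I4 μ p i q j r l s m
      = ∫ U, m4 p i q j r l s m (permU σ * U) ∂μ :=
        (int_inv μ hμ (permU σ) (meas_m4 p i q j r l s m)).symm
    _ = ∫ U, m4 (σ p) i (σ q) j (σ r) l (σ s) m U ∂μ := by simp only [hpt]
    _ = _ := rfl

lemma I2_perm (hμ : ∀ g : Matrix.unitaryGroup ι ℂ, μ.map (fun x => g * x) = μ) (σ : Equiv.Perm ι) (p i q j : ι) :
    I2 μ p i q j = I2 μ (σ p) i (σ q) j := by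
  have hpt : ∀ U, m2 p i q j (permU σ * U) = m2 (σ p) i (σ q) j U := by
    intro U
    simp only [m2, ent]
    rw [permU_mul_apply, permU_mul_apply]
  calc I2 μ p i q j
      = ∫ U, m2 p i q j (permU σ * U) ∂μ :=
        (int_inv μ hμ (permU σ) (meas_m2 p i q j)).symm
    _ = ∫ U, m2 (σ p) i (σ q) j U ∂μ := by simp only [hpt]
    _ = _ := rfl

lemma I2_zero (hμ : ∀ g : Matrix.unitaryGroup ι ℂ, μ.map (fun x => g * x) = μ) {p q : ι} (hpq : p ≠ q) (i j : ι) : I2 μ p i q j = 0 := by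
  have h := I2_phase μ hμ p p i q j
  simp only [phaseD, if_pos rfl, if_neg (fun hh : q = p => hpq hh.symm), _root_.map_one, mul_one] at h
  exact eq_mul_self_zero h (by norm_num [Complex.ext_iff])

lemma I4_zero (hμ : ∀ g : Matrix.unitaryGroup ι ℂ, μ.map (fun x => g * x) = μ) {p q r s : ι} (t : ι)
    (hc : ((if p = t then 1 else 0) + (if r = t then 1 else 0) : ℕ)
        ≠ (if q = t then 1 else 0) + (if s = t then 1 else 0)) (i j l m : ι) :
    I4 μ p i q j r l s m = 0 := by
  have h := I4_phase μ hμ t p i q j r l s m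
  have hcoef : phaseD t p * conj (phaseD t q) * (phaseD t r * conj (phaseD t s)) ≠ 1 := by
    simp only [phaseD, apply_ite conj, Complex.conj_I, _root_.map_one]
    split_ifs at hc ⊢ <;>
      first
        | (exact absurd rfl hc)
        | (norm_num [Complex.conj_I, Complex.ext_iff])
  exact eq_mul_self_zero h hcoef

-- pointwise unitarity contractions

lemma sum_m2_col (i j : ι) (U : Matrix.unitaryGroup ι ℂ) :
    ∑ p, m2 p i p j U = if i = j then 1 else 0 := by
  have h : (star (U : Matrix ι ι ℂ) * (U : Matrix ι ι ℂ)) i j = (1 : Matrix ι ι ℂ) i j := by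
    rw [Matrix.UnitaryGroup.star_mul_self]
  rw [Matrix.mul_apply] at h
  have h2 : ∑ p, m2 p i p j U = conj ((1 : Matrix ι ι ℂ) i j) := by
    rw [← h, map_sum]
    apply Finset.sum_congr rfl
    intro p _
    simp only [m2, ent, Matrix.star_apply, ← starRingEnd_apply, _root_.map_mul, Complex.conj_conj]
  rw [h2, Matrix.one_apply]
  split_ifs <;> simp

lemma sum_conj_mul (j l : ι) (U : Matrix.unitaryGroup ι ℂ) :
    ∑ t, conj (ent t j U) * ent t l U = if j = l then 1 else 0 := by
  have h : (star (U : Matrix ι ι ℂ) * (U : Matrix ι ι ℂ)) j l = (1 : Matrix ι ι ℂ) j l := by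
    rw [Matrix.UnitaryGroup.star_mul_self]
  rw [Matrix.mul_apply, Matrix.one_apply] at h
  simp only [Matrix.star_apply, ← starRingEnd_apply] at h
  exact h

lemma sum_I2 (i j : ι) : ∑ p, I2 μ p i p j = if i = j then 1 else 0 := by
  have h := integral_finset_sum (μ := μ) Finset.univ
    (f := fun p U => m2 p i p j U) (fun p _ => integrable_m2 μ p i p j)
  calc ∑ p, I2 μ p i p j = ∫ U, ∑ p, m2 p i p j U ∂μ := h.symm
    _ = ∫ _U, (if i = j then (1:ℂ) else 0) ∂μ := by
        apply integral_congr_ae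
        filter_upwards with U
        exact sum_m2_col i j U
    _ = if i = j then 1 else 0 := by simp

lemma sum_I4_c1 (i j r l s m : ι) :
    ∑ p, I4 μ p i p j r l s m = (if i = j then 1 else 0) * I2 μ r l s m := by
  have h := integral_finset_sum (μ := μ) Finset.univ
    (f := fun p U => m4 p i p j r l s m U) (fun p _ => integrable_m4 μ p i p j r l s m)
  calc ∑ p, I4 μ p i p j r l s m = ∫ U, ∑ p, m4 p i p j r l s m U ∂μ := h.symm
    _ = ∫ U, (if i = j then (1:ℂ) else 0) * m2 r l s m U ∂μ := by
        apply integral_congr_ae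
        filter_upwards with U
        simp only [m4, ← Finset.sum_mul, sum_m2_col]
    _ = (if i = j then 1 else 0) * I2 μ r l s m := integral_const_mul _ _

lemma sum_I4_c2 (p i j l s m : ι) :
    ∑ t, I4 μ p i t j t l s m = (if j = l then 1 else 0) * I2 μ p i s m := by
  have h := integral_finset_sum (μ := μ) Finset.univ
    (f := fun t U => m4 p i t j t l s m U) (fun t _ => integrable_m4 μ p i t j t l s m)
  have key : ∀ U : Matrix.unitaryGroup ι ℂ, ∑ t, m4 p i t j t l s m U
      = (if j = l then (1:ℂ) else 0) * m2 p i s m U := by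
    intro U
    have hterm : ∀ t : ι, m4 p i t j t l s m U
        = (conj (ent t j U) * ent t l U) * m2 p i s m U := by
      intro t
      simp only [m4, m2]
      ring
    rw [Finset.sum_congr rfl (fun t _ => hterm t), ← Finset.sum_mul, sum_conj_mul]
  calc ∑ t, I4 μ p i t j t l s m = ∫ U, ∑ t, m4 p i t j t l s m U ∂μ := h.symm
    _ = ∫ U, (if j = l then (1:ℂ) else 0) * m2 p i s m U ∂μ := by
        apply integral_congr_ae
        filter_upwards with U
        exact key U
    _ = (if j = l then 1 else 0) * I2 μ p i s m := integral_const_mul _ _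

lemma I2_formula (hμ : ∀ g : Matrix.unitaryGroup ι ℂ, μ.map (fun x => g * x) = μ) (hcard : 0 < Fintype.card ι) (p i q j : ι) :
    I2 μ p i q j = (if p = q then 1 else 0) * (if i = j then 1 else 0)
      / (Fintype.card ι : ℂ) := by
  have hn0 : (Fintype.card ι : ℂ) ≠ 0 := Nat.cast_ne_zero.mpr hcard.ne'
  by_cases hpq : p = q
  · subst hpq
    have hall : ∀ p', I2 μ p' i p' j = I2 μ p i p j := by
      intro p'
      have h := I2_perm μ hμ (Equiv.swap p' p) p' i p' j
      rwa [Equiv.swap_apply_left] at h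
    have hsum := sum_I2 μ i j
    rw [Finset.sum_congr rfl (fun p' _ => hall p')] at hsum
    rw [Finset.sum_const, Finset.card_univ, nsmul_eq_mul] at hsum
    rw [if_pos rfl, one_mul, eq_div_iff hn0]
    linear_combination hsum
  · rw [I2_zero μ hμ hpq i j]
    simp [hpq]

theorem I4_formula (hμ : ∀ g : Matrix.unitaryGroup ι ℂ, μ.map (fun x => g * x) = μ)
    (hcard : 1 < Fintype.card ι) (i j l m p q r s : ι) :
    I4 μ p i q j r l s m =
      ((Fintype.card ι : ℂ) * ((if i = j then 1 else 0) * (if l = m then 1 else 0))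
          - (if i = m then 1 else 0) * (if j = l then 1 else 0))
        * ((if p = q then 1 else 0) * (if r = s then 1 else 0))
        / ((Fintype.card ι : ℂ) * ((Fintype.card ι : ℂ) ^ 2 - 1))
      + ((Fintype.card ι : ℂ) * ((if i = m then 1 else 0) * (if j = l then 1 else 0))
          - (if i = j then 1 else 0) * (if l = m then 1 else 0))
        * ((if p = s then 1 else 0) * (if q = r then 1 else 0))
        / ((Fintype.card ι : ℂ) * ((Fintype.card ι : ℂ) ^ 2 - 1)) := by
  obtain ⟨t0, t1, ht⟩ := Fintype.exists_pair_of_one_lt_card hcard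
  have hcard0 : 0 < Fintype.card ι := by omega
  set n : ℂ := (Fintype.card ι : ℂ) with hn
  have hn0 : n ≠ 0 := by rw [hn]; exact Nat.cast_ne_zero.mpr hcard0.ne'
  have hne1 : n ≠ 1 := by
    rw [hn]; intro hh
    have : Fintype.card ι = 1 := by exact_mod_cast hh
    omega
  have hn1' : n - 1 ≠ 0 := sub_ne_zero.mpr hne1
  have hn2' : n + 1 ≠ 0 := by
    rw [hn]; intro hh
    have h0 : ((Fintype.card ι + 1 : ℕ) : ℂ) = 0 := by push_cast; linear_combination hh
    exact (Nat.cast_ne_zero.mpr (Nat.succ_ne_zero _)) h0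
  have hnsq : n ^ 2 - 1 ≠ 0 := by
    intro hh
    have h0 : (n - 1) * (n + 1) = 0 := by linear_combination hh
    rcases mul_eq_zero.mp h0 with h | h
    exacts [hn1' h, hn2' h]
  set x := I4 μ t0 i t0 j t0 l t0 m with hxdef
  set y := I4 μ t0 i t0 j t1 l t1 m with hydef
  set z := I4 μ t0 i t1 j t1 l t0 m with hzdef
  have hx : ∀ p, I4 μ p i p j p l p m = x := by
    intro p
    have h := I4_perm μ hμ (Equiv.swap t0 p) t0 i t0 j t0 l t0 m
    rw [Equiv.swap_apply_left] at h
    rw [hxdef]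
    exact h.symm
  have hy : ∀ p r, p ≠ r → I4 μ p i p j r l r m = y := by
    intro p r hpr
    obtain ⟨σ, h0, h1⟩ := exists_perm_two ht hpr
    have h := I4_perm μ hμ σ t0 i t0 j t1 l t1 m
    rw [h0, h1] at h
    rw [hydef]
    exact h.symm
  have hz : ∀ p q, p ≠ q → I4 μ p i q j q l p m = z := by
    intro p q hpq
    obtain ⟨σ, h0, h1⟩ := exists_perm_two ht hpq
    have h := I4_perm μ hμ σ t0 i t1 j t1 l t0 m
    rw [h0, h1] at h
    rw [hzdef]
    exact h.symm
  have hzero : ∀ p q r s : ι, ¬(p = q ∧ r = s) → ¬(p = s ∧ q = r) →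
      I4 μ p i q j r l s m = 0 := by
    intro p q r s h1 h2
    by_cases hpq : p = q
    · have hrs : r ≠ s := fun hh => h1 ⟨hpq, hh⟩
      refine I4_zero μ hμ r ?_ i j l m
      rw [if_pos rfl, ← hpq, if_neg (fun hh : s = r => hrs hh.symm)]
      by_cases hpr : p = r <;> simp [hpr]
    · by_cases hps : p = s
      · have hqr : q ≠ r := fun hh => h2 ⟨hps, hh⟩
        refine I4_zero μ hμ q ?_ i j l m
        rw [if_neg hpq, if_pos rfl, if_neg (fun hh : r = q => hqr hh.symm),
          if_neg (fun hh : s = q => hpq (hps.trans hh))]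
        norm_num
      · refine I4_zero μ hμ p ?_ i j l m
        rw [if_pos rfl, if_neg (fun hh : q = p => hpq hh.symm),
          if_neg (fun hh : s = p => hps hh.symm)]
        by_cases hrp : r = p <;> simp [hrp]
  -- Hadamard step: x = y + z
  set pk : Bool → ι := fun b => if b then t1 else t0 with hpk
  have hpkf : pk false = t0 := by simp [hpk]
  have hpkt : pk true = t1 := by simp [hpk]
  have hexpand : ∀ U, m4 t0 i t0 j t0 l t0 m (hadU t0 t1 ht * U)
      = (1/4 : ℂ) * ∑ v : Bool × Bool × Bool × Bool,
          m4 (pk v.1) i (pk v.2.1) j (pk v.2.2.1) l (pk v.2.2.2) m U := by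
    intro U
    have he : ∀ c : ι, ent t0 c (hadU t0 t1 ht * U) = (s2 : ℂ) * (ent t0 c U + ent t1 c U) :=
      fun c => hadU_mul_apply_t t0 t1 ht U c
    simp only [m4, m2, he, _root_.map_mul, map_add, Complex.conj_ofReal,
      Fintype.sum_prod_type, Fintype.sum_bool, hpkf, hpkt]
    linear_combination (((s2:ℂ) * (s2:ℂ) + 1/2) *
      ((ent t0 i U + ent t1 i U) * ((conj (ent t0 j U) + conj (ent t1 j U)) *
        ((ent t0 l U + ent t1 l U) * (conj (ent t0 m U) + conj (ent t1 m U)))))) * s2_sq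
  have hHad : x = (1/4 : ℂ) * ∑ v : Bool × Bool × Bool × Bool,
      I4 μ (pk v.1) i (pk v.2.1) j (pk v.2.2.1) l (pk v.2.2.2) m := by
    have h := int_inv μ hμ (hadU t0 t1 ht) (meas_m4 t0 i t0 j t0 l t0 m)
    calc x = ∫ U, m4 t0 i t0 j t0 l t0 m (hadU t0 t1 ht * U) ∂μ := by
          rw [hxdef]; exact h.symm
      _ = ∫ U, (1/4 : ℂ) * ∑ v : Bool × Bool × Bool × Bool,
            m4 (pk v.1) i (pk v.2.1) j (pk v.2.2.1) l (pk v.2.2.2) m U ∂μ := by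
          apply integral_congr_ae
          filter_upwards with U
          exact hexpand U
      _ = (1/4 : ℂ) * ∑ v : Bool × Bool × Bool × Bool,
            I4 μ (pk v.1) i (pk v.2.1) j (pk v.2.2.1) l (pk v.2.2.2) m := by
          rw [integral_const_mul]
          congr 1
          exact integral_finset_sum Finset.univ
            (fun v _ => integrable_m4 μ _ _ _ _ _ _ _ _)
  have hxyz : x = y + z := by
    have hv_x1 : I4 μ t1 i t1 j t1 l t1 m = x := hx t1
    have hv_y1 : I4 μ t1 i t1 j t0 l t0 m = y := hy t1 t0 (Ne.symm ht)
    have hv_z1 : I4 μ t1 i t0 j t0 l t1 m = z := hz t1 t0 (Ne.symm ht)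
    have hzA : I4 μ t0 i t0 j t0 l t1 m = 0 :=
      hzero t0 t0 t0 t1 (fun hh => ht hh.2) (fun hh => ht hh.1)
    have hzB : I4 μ t0 i t0 j t1 l t0 m = 0 :=
      hzero t0 t0 t1 t0 (fun hh => ht hh.2.symm) (fun hh => ht hh.2)
    have hzC : I4 μ t0 i t1 j t0 l t0 m = 0 :=
      hzero t0 t1 t0 t0 (fun hh => ht hh.1) (fun hh => ht hh.2.symm)
    have hzD : I4 μ t0 i t1 j t0 l t1 m = 0 :=
      hzero t0 t1 t0 t1 (fun hh => ht hh.1) (fun hh => ht hh.1)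
    have hzE : I4 μ t0 i t1 j t1 l t1 m = 0 :=
      hzero t0 t1 t1 t1 (fun hh => ht hh.1) (fun hh => ht hh.1)
    have hzF : I4 μ t1 i t0 j t0 l t0 m = 0 :=
      hzero t1 t0 t0 t0 (fun hh => ht hh.1.symm) (fun hh => ht hh.1.symm)
    have hzG : I4 μ t1 i t0 j t1 l t0 m = 0 :=
      hzero t1 t0 t1 t0 (fun hh => ht hh.1.symm) (fun hh => ht hh.1.symm)
    have hzH : I4 μ t1 i t0 j t1 l t1 m = 0 :=
      hzero t1 t0 t1 t1 (fun hh => ht hh.1.symm) (fun hh => ht hh.2)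
    have hzI : I4 μ t1 i t1 j t0 l t1 m = 0 :=
      hzero t1 t1 t0 t1 (fun hh => ht hh.2) (fun hh => ht hh.2.symm)
    have hzJ : I4 μ t1 i t1 j t1 l t0 m = 0 :=
      hzero t1 t1 t1 t0 (fun hh => ht hh.2.symm) (fun hh => ht hh.1.symm)
    have h16 : (∑ v : Bool × Bool × Bool × Bool,
        I4 μ (pk v.1) i (pk v.2.1) j (pk v.2.2.1) l (pk v.2.2.2) m)
        = 2*x + 2*y + 2*z := by
      simp only [Fintype.sum_prod_type, Fintype.sum_bool, hpkf, hpkt]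
      rw [← hxdef, ← hydef, ← hzdef, hv_x1, hv_y1, hv_z1, hzA, hzB, hzC, hzD, hzE, hzF,
        hzG, hzH, hzI, hzJ]
      ring
    rw [h16] at hHad
    linear_combination 2 * hHad
  -- contraction identities
  have hc1 : n * (n * y + (x - y))
      = (if i = j then (1:ℂ) else 0) * (if l = m then 1 else 0) := by
    have hsum := sum_I4_c1 μ i j t1 l t1 m
    have hterm : ∀ p : ι, I4 μ p i p j t1 l t1 m = y + (if p = t1 then x - y else 0) := by
      intro p
      by_cases hp : p = t1
      · rw [hp, if_pos rfl, hx t1]; ring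
      · rw [if_neg hp, add_zero]; exact hy p t1 hp
    rw [Finset.sum_congr rfl (fun p _ => hterm p), Finset.sum_add_distrib, Finset.sum_const,
      Finset.card_univ, Finset.sum_ite_eq' Finset.univ t1, if_pos (Finset.mem_univ t1),
      nsmul_eq_mul] at hsum
    rw [I2_formula μ hμ hcard0 t1 l t1 m, if_pos rfl, one_mul] at hsum
    rw [← hn] at hsum
    rw [hsum]
    field_simp
  have hc2 : n * (n * z + (x - z))
      = (if j = l then (1:ℂ) else 0) * (if i = m then 1 else 0) := by
    have hsum := sum_I4_c2 μ t0 i j l t0 m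
    have hterm : ∀ t : ι, I4 μ t0 i t j t l t0 m = z + (if t = t0 then x - z else 0) := by
      intro t
      by_cases hp : t = t0
      · rw [hp, if_pos rfl, hx t0]; ring
      · rw [if_neg hp, add_zero]; exact hz t0 t (fun hh => hp hh.symm)
    rw [Finset.sum_congr rfl (fun t _ => hterm t), Finset.sum_add_distrib, Finset.sum_const,
      Finset.card_univ, Finset.sum_ite_eq' Finset.univ t0, if_pos (Finset.mem_univ t0),
      nsmul_eq_mul] at hsum
    rw [I2_formula μ hμ hcard0 t0 i t0 m, if_pos rfl, one_mul] at hsum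
    rw [← hn] at hsum
    rw [hsum]
    field_simp
  have hyv : y * (n * (n ^ 2 - 1))
      = n * ((if i = j then (1:ℂ) else 0) * (if l = m then 1 else 0))
        - (if i = m then 1 else 0) * (if j = l then 1 else 0) := by
    linear_combination n * hc1 - hc2 - n * (n - 1) * hxyz
  have hzv : z * (n * (n ^ 2 - 1))
      = n * ((if i = m then (1:ℂ) else 0) * (if j = l then 1 else 0))
        - (if i = j then 1 else 0) * (if l = m then 1 else 0) := by
    linear_combination n * hc2 - hc1 - n * (n - 1) * hxyz
  have hK : n * (n ^ 2 - 1) ≠ 0 := mul_ne_zero hn0 hnsq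
  -- final case analysis
  by_cases hpq : p = q
  · by_cases hrs : r = s
    · by_cases hps : p = s
      · by_cases hqr : q = r
        · have hrp : r = p := hqr.symm.trans hpq.symm
          rw [← hpq, ← hps, hrp, hx p, hxyz]
          simp only [eq_self_iff_true, if_true]
          rw [← add_div, eq_div_iff hK]
          linear_combination hyv + hzv
        · exact absurd (hpq.symm.trans (hps.trans hrs.symm)) hqr
      · by_cases hqr : q = r
        · exact absurd (hpq.trans (hqr.trans hrs)) hps
        · have hpr : p ≠ r := fun hh => hps (hh.trans hrs)
          rw [← hpq, ← hrs, hy p r hpr]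
          simp only [eq_self_iff_true, if_true, if_neg hpr]
          rw [← add_div, eq_div_iff hK]
          linear_combination hyv
    · by_cases hps : p = s
      · by_cases hqr : q = r
        · exact absurd (hqr.symm.trans (hpq.symm.trans hps)) hrs
        · rw [hzero p q r s (fun hh => hrs hh.2) (fun hh => hqr hh.2),
            if_neg hrs, if_neg hqr]
          ring
      · by_cases hqr : q = r
        · rw [hzero p q r s (fun hh => hrs hh.2) (fun hh => hps hh.1),
            if_neg hrs, if_neg hps]
          ring
        · rw [hzero p q r s (fun hh => hrs hh.2) (fun hh => hps hh.1),
            if_neg hrs, if_neg hps]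
          ring
  · by_cases hrs : r = s
    · by_cases hps : p = s
      · by_cases hqr : q = r
        · exact absurd (hps.trans (hrs.symm.trans hqr.symm)) hpq
        · rw [hzero p q r s (fun hh => hpq hh.1) (fun hh => hqr hh.2),
            if_neg hpq, if_neg hqr]
          ring
      · by_cases hqr : q = r
        · rw [hzero p q r s (fun hh => hpq hh.1) (fun hh => hps hh.1),
            if_neg hpq, if_neg hps]
          ring
        · rw [hzero p q r s (fun hh => hpq hh.1) (fun hh => hps hh.1),
            if_neg hpq, if_neg hps]
          ring
    · by_cases hps : p = s
      · by_cases hqr : q = r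
        · rw [← hps, ← hqr, hz p q hpq]
          simp only [eq_self_iff_true, if_true, if_neg hpq,
            if_neg (fun hh : q = p => hpq hh.symm)]
          rw [← add_div, eq_div_iff hK]
          linear_combination hzv
        · rw [hzero p q r s (fun hh => hpq hh.1) (fun hh => hqr hh.2),
            if_neg hpq, if_neg hqr]
          ring
      · by_cases hqr : q = r
        · rw [hzero p q r s (fun hh => hpq hh.1) (fun hh => hps hh.1),
            if_neg hpq, if_neg hps]
          ring
        · rw [hzero p q r s (fun hh => hpq hh.1) (fun hh => hps hh.1),
            if_neg hpq, if_neg hps]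
          ring

-- ============ sum collapse helpers ============

lemma collapse_single {κ : Type*} [Fintype κ] [DecidableEq κ] (i : κ) (f : κ → ℂ) :
    ∑ j, f j * (if i = j then (1:ℂ) else 0) = f i := by
  simp only [mul_ite, mul_one, mul_zero]
  rw [Finset.sum_ite_eq]
  simp

lemma collapse1 {κ : Type*} [Fintype κ] [DecidableEq κ] (f g : κ → κ → ℂ) :
    ∑ i, ∑ l, ∑ j, ∑ m, (f i j * g l m) *
        ((if i = j then (1:ℂ) else 0) * (if l = m then 1 else 0))
      = (∑ i, f i i) * (∑ l, g l l) := by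
  rw [Finset.sum_mul_sum]
  apply Finset.sum_congr rfl; intro i _
  apply Finset.sum_congr rfl; intro l _
  have h1 : ∀ j m : κ, (f i j * g l m) *
      ((if i = j then (1:ℂ) else 0) * (if l = m then 1 else 0))
      = (f i j * (if i = j then (1:ℂ) else 0)) * (g l m * (if l = m then 1 else 0)) := by
    intros; ring
  rw [Finset.sum_congr rfl (fun j _ => Finset.sum_congr rfl (fun m _ => h1 j m)),
    ← Finset.sum_mul_sum, collapse_single i (f i), collapse_single l (g l)]

lemma collapse2 {κ : Type*} [Fintype κ] [DecidableEq κ] (f g : κ → κ → ℂ) :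
    ∑ i, ∑ l, ∑ j, ∑ m, (f i j * g l m) *
        ((if i = m then (1:ℂ) else 0) * (if j = l then 1 else 0))
      = ∑ i, ∑ j, f i j * g j i := by
  apply Finset.sum_congr rfl; intro i _
  have hm : ∀ l j : κ, ∑ m, (f i j * g l m) *
      ((if i = m then (1:ℂ) else 0) * (if j = l then 1 else 0))
      = (f i j * (if j = l then (1:ℂ) else 0)) * g l i := by
    intro l j
    have hh : ∀ m : κ, (f i j * g l m) *
        ((if i = m then (1:ℂ) else 0) * (if j = l then 1 else 0))
        = (f i j * (if j = l then (1:ℂ) else 0)) * (g l m * (if i = m then 1 else 0)) := by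
      intros; ring
    rw [Finset.sum_congr rfl (fun m _ => hh m), ← Finset.mul_sum,
      collapse_single i (g l)]
  rw [Finset.sum_congr rfl (fun l _ => Finset.sum_congr rfl (fun j _ => hm l j)),
    Finset.sum_comm]
  apply Finset.sum_congr rfl; intro j _
  have hh2 : ∀ l : κ, (f i j * (if j = l then (1:ℂ) else 0)) * g l i
      = (g l i * f i j) * (if j = l then (1:ℂ) else 0) := by intros; ring
  rw [Finset.sum_congr rfl (fun l _ => hh2 l), collapse_single j (fun l => g l i * f i j)]
  ring

end Wg

open ComplexConjugate

/-- The first `d₁` columns of a unitary of size `d₂M`, under the identification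
`ℂ^{d₂M} ≅ ℂ^{d₂} ⊗ ℂ^{M}`. -/
def stinespringIsometry (d₁ d₂ M : ℕ) (h : d₁ ≤ d₂ * M)
    (U : Matrix.unitaryGroup (Fin d₂ × Fin M) ℂ) :
    Matrix (Fin d₂ × Fin M) (Fin d₁) ℂ :=
  Matrix.of fun p i =>
    (U : Matrix (Fin d₂ × Fin M) (Fin d₂ × Fin M) ℂ) p (finProdFinEquiv.symm (Fin.castLE h i))

/-- Partial trace over the second (environment) factor. -/
def ptrEnv {d M : ℕ} (Y : Matrix (Fin d × Fin M) (Fin d × Fin M) ℂ) :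
    Matrix (Fin d) (Fin d) ℂ :=
  Matrix.of fun a b => ∑ k : Fin M, Y (a, k) (b, k)

/-- The random Stinespring channel `Φ_U(X) = Tr_M(V_U X V_U†)`. -/
def stinespringChannel (d₁ d₂ M : ℕ) (h : d₁ ≤ d₂ * M)
    (U : Matrix.unitaryGroup (Fin d₂ × Fin M) ℂ)
    (X : Matrix (Fin d₁) (Fin d₁) ℂ) : Matrix (Fin d₂) (Fin d₂) ℂ :=
  ptrEnv (stinespringIsometry d₁ d₂ M h U * X * (stinespringIsometry d₁ d₂ M h U)ᴴ)

/-- Average of `Tr(Φ_U(A)Φ_U(B))` over the Haar probability measure on `U(d₂M)`. -/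
theorem average_trace_product (d₁ d₂ M : ℕ) (hd₁ : 0 < d₁) (hd₂ : 0 < d₂) (hM : 0 < M)
    (h : d₁ ≤ d₂ * M) (h2 : 2 ≤ d₂ * M)
    (μ : Measure (Matrix.unitaryGroup (Fin d₂ × Fin M) ℂ)) [IsProbabilityMeasure μ]
    (hμ : ∀ g : Matrix.unitaryGroup (Fin d₂ × Fin M) ℂ, μ.map (fun x => g * x) = μ)
    (A B : Matrix (Fin d₁) (Fin d₁) ℂ) :
    ∫ U, ((stinespringChannel d₁ d₂ M h U A) * (stinespringChannel d₁ d₂ M h U B)).trace ∂μ =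
      (A.trace * B.trace * ((d₂ : ℂ) * ((M : ℂ) ^ 2 - 1)) +
          (A * B).trace * ((M : ℂ) * ((d₂ : ℂ) ^ 2 - 1))) /
        (((d₂ : ℂ) * (M : ℂ)) ^ 2 - 1) := by
  classical
  set e : Fin d₁ → Fin d₂ × Fin M := fun i => finProdFinEquiv.symm (Fin.castLE h i) with he_def
  have he : Function.Injective e := by
    intro u v huv
    have h1 : Fin.castLE h u = Fin.castLE h v := finProdFinEquiv.symm.injective huv
    exact Fin.castLE_injective h h1
  have hcardval : Fintype.card (Fin d₂ × Fin M) = d₂ * M := by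
    rw [Fintype.card_prod, Fintype.card_fin, Fintype.card_fin]
  have hcard : 1 < Fintype.card (Fin d₂ × Fin M) := by rw [hcardval]; omega
  -- entries of the channel
  have chan_entry : ∀ (X : Matrix (Fin d₁) (Fin d₁) ℂ)
      (U : Matrix.unitaryGroup (Fin d₂ × Fin M) ℂ) (a b : Fin d₂),
      stinespringChannel d₁ d₂ M h U X a b
        = ∑ k : Fin M, ∑ i : Fin d₁, ∑ j : Fin d₁,
            Wg.ent (a,k) (e i) U * X i j * conj (Wg.ent (b,k) (e j) U) := by
    intro X U a b
    show ∑ k : Fin M, ((stinespringIsometry d₁ d₂ M h U * X *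
        (stinespringIsometry d₁ d₂ M h U)ᴴ) (a,k) (b,k)) = _
    apply Finset.sum_congr rfl; intro k _
    rw [Matrix.mul_apply]
    have hterm : ∀ j : Fin d₁,
        (stinespringIsometry d₁ d₂ M h U * X) (a,k) j *
          (stinespringIsometry d₁ d₂ M h U)ᴴ j (b,k)
        = ∑ i : Fin d₁, Wg.ent (a,k) (e i) U * X i j * conj (Wg.ent (b,k) (e j) U) := by
      intro j
      rw [Matrix.mul_apply, Matrix.conjTranspose_apply, Finset.sum_mul]
      apply Finset.sum_congr rfl; intro i _
      rw [← starRingEnd_apply]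
      rfl
    rw [Finset.sum_congr rfl (fun j _ => hterm j), Finset.sum_comm]
  -- pointwise trace expansion
  have trace_expand : ∀ U : Matrix.unitaryGroup (Fin d₂ × Fin M) ℂ,
      ((stinespringChannel d₁ d₂ M h U A) * (stinespringChannel d₁ d₂ M h U B)).trace
      = ∑ w : (Fin d₂ × Fin d₂) × (Fin M × Fin M) × (Fin d₁ × Fin d₁) × (Fin d₁ × Fin d₁),
          A w.2.2.1.1 w.2.2.2.1 * B w.2.2.1.2 w.2.2.2.2 *
            Wg.m4 (w.1.1, w.2.1.1) (e w.2.2.1.1) (w.1.2, w.2.1.1) (e w.2.2.2.1)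
              (w.1.2, w.2.1.2) (e w.2.2.1.2) (w.1.1, w.2.1.2) (e w.2.2.2.2) U := by
    intro U
    show ∑ a : Fin d₂, ((stinespringChannel d₁ d₂ M h U A) *
        (stinespringChannel d₁ d₂ M h U B)) a a = _
    simp only [Matrix.mul_apply, Fintype.sum_prod_type]
    simp only [chan_entry A U, chan_entry B U]
    apply Finset.sum_congr rfl; intro a _
    apply Finset.sum_congr rfl; intro b _
    rw [Finset.sum_mul_sum]
    apply Finset.sum_congr rfl; intro k _
    apply Finset.sum_congr rfl; intro k' _
    rw [Finset.sum_mul_sum]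
    apply Finset.sum_congr rfl; intro i _
    apply Finset.sum_congr rfl; intro l _
    rw [Finset.sum_mul_sum]
    apply Finset.sum_congr rfl; intro j _
    apply Finset.sum_congr rfl; intro m _
    simp only [Wg.m4, Wg.m2]
    ring
  -- integrate term by term
  have hstep : (∫ U, ((stinespringChannel d₁ d₂ M h U A) *
      (stinespringChannel d₁ d₂ M h U B)).trace ∂μ)
      = ∑ w : (Fin d₂ × Fin d₂) × (Fin M × Fin M) × (Fin d₁ × Fin d₁) × (Fin d₁ × Fin d₁),
          A w.2.2.1.1 w.2.2.2.1 * B w.2.2.1.2 w.2.2.2.2 *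
            Wg.I4 μ (w.1.1, w.2.1.1) (e w.2.2.1.1) (w.1.2, w.2.1.1) (e w.2.2.2.1)
              (w.1.2, w.2.1.2) (e w.2.2.1.2) (w.1.1, w.2.1.2) (e w.2.2.2.2) := by
    calc (∫ U, ((stinespringChannel d₁ d₂ M h U A) *
        (stinespringChannel d₁ d₂ M h U B)).trace ∂μ)
        = ∫ U, (∑ w : (Fin d₂ × Fin d₂) × (Fin M × Fin M) × (Fin d₁ × Fin d₁) × (Fin d₁ × Fin d₁),
            A w.2.2.1.1 w.2.2.2.1 * B w.2.2.1.2 w.2.2.2.2 *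
              Wg.m4 (w.1.1, w.2.1.1) (e w.2.2.1.1) (w.1.2, w.2.1.1) (e w.2.2.2.1)
                (w.1.2, w.2.1.2) (e w.2.2.1.2) (w.1.1, w.2.1.2) (e w.2.2.2.2) U) ∂μ := by
          apply integral_congr_ae
          filter_upwards with U
          exact trace_expand U
      _ = _ := by
          rw [integral_finset_sum Finset.univ
            (fun w _ => (Wg.integrable_m4 μ _ _ _ _ _ _ _ _).const_mul _)]
          apply Finset.sum_congr rfl; intro w _
          exact integral_const_mul _ _
  -- value of I4
  have hsq : ∀ (c : Prop) [Decidable c],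
      ((if c then (1:ℂ) else 0) * (if c then (1:ℂ) else 0)) = (if c then (1:ℂ) else 0) := by
    intro c _; split_ifs <;> norm_num
  have hI4 : ∀ (a b : Fin d₂) (k k' : Fin M) (i j l m : Fin d₁),
      Wg.I4 μ (a,k) (e i) (b,k) (e j) (b,k') (e l) (a,k') (e m)
      = (((Fintype.card (Fin d₂ × Fin M) : ℂ) *
            ((if i = j then (1:ℂ) else 0) * (if l = m then (1:ℂ) else 0))
          - (if i = m then (1:ℂ) else 0) * (if j = l then (1:ℂ) else 0))
          * (if a = b then (1:ℂ) else 0)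
        + ((Fintype.card (Fin d₂ × Fin M) : ℂ) *
            ((if i = m then (1:ℂ) else 0) * (if j = l then (1:ℂ) else 0))
          - (if i = j then (1:ℂ) else 0) * (if l = m then (1:ℂ) else 0))
          * (if k = k' then (1:ℂ) else 0))
        / ((Fintype.card (Fin d₂ × Fin M) : ℂ) *
            ((Fintype.card (Fin d₂ × Fin M) : ℂ) ^ 2 - 1)) := by
    intro a b k k' i j l m
    have e1 : (if ((a,k) : Fin d₂ × Fin M) = (b,k) then (1:ℂ) else 0)
        = (if a = b then (1:ℂ) else 0) := by
      by_cases hab : a = b <;> simp [Prod.ext_iff, hab]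
    have e2 : (if ((b,k') : Fin d₂ × Fin M) = (a,k') then (1:ℂ) else 0)
        = (if a = b then (1:ℂ) else 0) := by
      by_cases hab : a = b
      · simp [Prod.ext_iff, hab]
      · have hba : ¬ b = a := fun hh => hab hh.symm
        simp [Prod.ext_iff, hab, hba]
    have e3 : (if ((a,k) : Fin d₂ × Fin M) = (a,k') then (1:ℂ) else 0)
        = (if k = k' then (1:ℂ) else 0) := by
      by_cases hk : k = k' <;> simp [Prod.ext_iff, hk]
    have e4 : (if ((b,k) : Fin d₂ × Fin M) = (b,k') then (1:ℂ) else 0)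
        = (if k = k' then (1:ℂ) else 0) := by
      by_cases hk : k = k' <;> simp [Prod.ext_iff, hk]
    have e5 : ∀ (u v : Fin d₁), (if e u = e v then (1:ℂ) else 0)
        = (if u = v then (1:ℂ) else 0) := by
      intro u v; by_cases huv : u = v <;> simp [he.eq_iff, huv]
    rw [Wg.I4_formula μ hμ hcard (e i) (e j) (e l) (e m) (a,k) (b,k) (b,k') (a,k')]
    simp only [e1, e2, e3, e4, e5]
    rw [← add_div]
    congr 1
    simp only [hsq]
  -- inner sums over matrix indices
  have htrA : ∑ i, A i i = A.trace := rfl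
  have htrB : ∑ l, B l l = B.trace := rfl
  have htrAB : ∑ i, ∑ j, A i j * B j i = (A * B).trace := by
    simp [Matrix.trace, Matrix.diag, Matrix.mul_apply]
  have hinner1 : ∑ i, ∑ l, ∑ j, ∑ m, (A i j * B l m) *
      ((Fintype.card (Fin d₂ × Fin M) : ℂ) *
          ((if i = j then (1:ℂ) else 0) * (if l = m then (1:ℂ) else 0))
        - (if i = m then (1:ℂ) else 0) * (if j = l then (1:ℂ) else 0))
      = (Fintype.card (Fin d₂ × Fin M) : ℂ) * (A.trace * B.trace) - (A * B).trace := by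
    have hterm : ∀ i l j m : Fin d₁, (A i j * B l m) *
        ((Fintype.card (Fin d₂ × Fin M) : ℂ) *
            ((if i = j then (1:ℂ) else 0) * (if l = m then (1:ℂ) else 0))
          - (if i = m then (1:ℂ) else 0) * (if j = l then (1:ℂ) else 0))
        = (Fintype.card (Fin d₂ × Fin M) : ℂ) *
            ((A i j * B l m) * ((if i = j then (1:ℂ) else 0) * (if l = m then (1:ℂ) else 0)))
          - (A i j * B l m) * ((if i = m then (1:ℂ) else 0) * (if j = l then (1:ℂ) else 0)) := by
      intros; ring
    simp only [hterm, Finset.sum_sub_distrib, ← Finset.mul_sum]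
    rw [Wg.collapse1 (fun i j => A i j) (fun l m => B l m),
      Wg.collapse2 (fun i j => A i j) (fun l m => B l m), htrA, htrB, htrAB]
  have hinner2 : ∑ i, ∑ l, ∑ j, ∑ m, (A i j * B l m) *
      ((Fintype.card (Fin d₂ × Fin M) : ℂ) *
          ((if i = m then (1:ℂ) else 0) * (if j = l then (1:ℂ) else 0))
        - (if i = j then (1:ℂ) else 0) * (if l = m then (1:ℂ) else 0))
      = (Fintype.card (Fin d₂ × Fin M) : ℂ) * (A * B).trace - A.trace * B.trace := by
    have hterm : ∀ i l j m : Fin d₁, (A i j * B l m) *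
        ((Fintype.card (Fin d₂ × Fin M) : ℂ) *
            ((if i = m then (1:ℂ) else 0) * (if j = l then (1:ℂ) else 0))
          - (if i = j then (1:ℂ) else 0) * (if l = m then (1:ℂ) else 0))
        = (Fintype.card (Fin d₂ × Fin M) : ℂ) *
            ((A i j * B l m) * ((if i = m then (1:ℂ) else 0) * (if j = l then (1:ℂ) else 0)))
          - (A i j * B l m) * ((if i = j then (1:ℂ) else 0) * (if l = m then (1:ℂ) else 0)) := by
      intros; ring
    simp only [hterm, Finset.sum_sub_distrib, ← Finset.mul_sum]
    rw [Wg.collapse1 (fun i j => A i j) (fun l m => B l m),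
      Wg.collapse2 (fun i j => A i j) (fun l m => B l m), htrA, htrB, htrAB]
  -- per-(a,b,k,k') inner value
  have hrow : ∀ (a b : Fin d₂) (k k' : Fin M),
      (∑ i, ∑ l, ∑ j, ∑ m, A i j * B l m *
        ((((Fintype.card (Fin d₂ × Fin M) : ℂ) *
              ((if i = j then (1:ℂ) else 0) * (if l = m then (1:ℂ) else 0))
            - (if i = m then (1:ℂ) else 0) * (if j = l then (1:ℂ) else 0))
            * (if a = b then (1:ℂ) else 0)
          + ((Fintype.card (Fin d₂ × Fin M) : ℂ) *
              ((if i = m then (1:ℂ) else 0) * (if j = l then (1:ℂ) else 0))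
            - (if i = j then (1:ℂ) else 0) * (if l = m then (1:ℂ) else 0))
            * (if k = k' then (1:ℂ) else 0))
          / ((Fintype.card (Fin d₂ × Fin M) : ℂ) *
              ((Fintype.card (Fin d₂ × Fin M) : ℂ) ^ 2 - 1))))
      = (if a = b then (1:ℂ) else 0) *
          (((Fintype.card (Fin d₂ × Fin M) : ℂ) * (A.trace * B.trace) - (A * B).trace)
            / ((Fintype.card (Fin d₂ × Fin M) : ℂ) *
                ((Fintype.card (Fin d₂ × Fin M) : ℂ) ^ 2 - 1)))
        + (if k = k' then (1:ℂ) else 0) *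
          (((Fintype.card (Fin d₂ × Fin M) : ℂ) * (A * B).trace - A.trace * B.trace)
            / ((Fintype.card (Fin d₂ × Fin M) : ℂ) *
                ((Fintype.card (Fin d₂ × Fin M) : ℂ) ^ 2 - 1))) := by
    intro a b k k'
    have hterm : ∀ i l j m : Fin d₁, A i j * B l m *
        ((((Fintype.card (Fin d₂ × Fin M) : ℂ) *
              ((if i = j then (1:ℂ) else 0) * (if l = m then (1:ℂ) else 0))
            - (if i = m then (1:ℂ) else 0) * (if j = l then (1:ℂ) else 0))
            * (if a = b then (1:ℂ) else 0)
          + ((Fintype.card (Fin d₂ × Fin M) : ℂ) *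
              ((if i = m then (1:ℂ) else 0) * (if j = l then (1:ℂ) else 0))
            - (if i = j then (1:ℂ) else 0) * (if l = m then (1:ℂ) else 0))
            * (if k = k' then (1:ℂ) else 0))
          / ((Fintype.card (Fin d₂ × Fin M) : ℂ) *
              ((Fintype.card (Fin d₂ × Fin M) : ℂ) ^ 2 - 1)))
        = ((A i j * B l m) *
            ((Fintype.card (Fin d₂ × Fin M) : ℂ) *
                ((if i = j then (1:ℂ) else 0) * (if l = m then (1:ℂ) else 0))
              - (if i = m then (1:ℂ) else 0) * (if j = l then (1:ℂ) else 0))) *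
            ((if a = b then (1:ℂ) else 0)
              / ((Fintype.card (Fin d₂ × Fin M) : ℂ) *
                  ((Fintype.card (Fin d₂ × Fin M) : ℂ) ^ 2 - 1)))
          + ((A i j * B l m) *
            ((Fintype.card (Fin d₂ × Fin M) : ℂ) *
                ((if i = m then (1:ℂ) else 0) * (if j = l then (1:ℂ) else 0))
              - (if i = j then (1:ℂ) else 0) * (if l = m then (1:ℂ) else 0))) *
            ((if k = k' then (1:ℂ) else 0)
              / ((Fintype.card (Fin d₂ × Fin M) : ℂ) *
                  ((Fintype.card (Fin d₂ × Fin M) : ℂ) ^ 2 - 1))) := by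
      intros
      ring
    simp only [hterm, Finset.sum_add_distrib, ← Finset.sum_mul]
    rw [hinner1, hinner2]
    ring
  -- sums over a,b,k,k'
  have hconst : ∀ c : ℂ, (∑ _k : Fin M, ∑ _k' : Fin M, c) = ((M:ℂ) * (M:ℂ)) * c := by
    intro c
    simp [Finset.sum_const, Finset.card_univ, Fintype.card_fin, nsmul_eq_mul]
    ring
  have hdel : ∀ {κ : Type} [Fintype κ] [DecidableEq κ] (c : ℂ) (u : κ),
      (∑ v : κ, (if u = v then (1:ℂ) else 0) * c) = c := by
    intro κ _ _ c u
    simp [ite_mul, one_mul, zero_mul, Finset.sum_ite_eq]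
  have hT1 : ∀ c : ℂ, (∑ a : Fin d₂, ∑ b : Fin d₂, ∑ _k : Fin M, ∑ _k' : Fin M,
      (if a = b then (1:ℂ) else 0) * c) = (d₂:ℂ) * ((M:ℂ) * (M:ℂ)) * c := by
    intro c
    simp only [hconst]
    have hb : ∀ a : Fin d₂, ∑ b : Fin d₂, ((M:ℂ) * (M:ℂ)) * ((if a = b then (1:ℂ) else 0) * c)
        = ((M:ℂ) * (M:ℂ)) * c := by
      intro a
      rw [← Finset.mul_sum, hdel c a]
    simp only [hb]
    simp [Finset.sum_const, Finset.card_univ, Fintype.card_fin, nsmul_eq_mul]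
    ring
  have hT2 : ∀ c : ℂ, (∑ _a : Fin d₂, ∑ _b : Fin d₂, ∑ k : Fin M, ∑ k' : Fin M,
      (if k = k' then (1:ℂ) else 0) * c) = ((d₂:ℂ) * (d₂:ℂ)) * ((M:ℂ) * c) := by
    intro c
    have hin : (∑ k : Fin M, ∑ k' : Fin M, (if k = k' then (1:ℂ) else 0) * c) = (M:ℂ) * c := by
      simp only [hdel c]
      simp [Finset.sum_const, Finset.card_univ, Fintype.card_fin, nsmul_eq_mul]
    simp only [hin]
    simp [Finset.sum_const, Finset.card_univ, Fintype.card_fin, nsmul_eq_mul]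
    ring
  -- put it together
  rw [hstep]
  simp only [Fintype.sum_prod_type]
  simp only [hI4]
  rw [Finset.sum_congr rfl (fun a _ => Finset.sum_congr rfl (fun b _ =>
    Finset.sum_congr rfl (fun k _ => Finset.sum_congr rfl (fun k' _ => hrow a b k k'))))]
  simp only [Finset.sum_add_distrib]
  rw [hT1 _, hT2 _]
  -- final arithmetic
  have hNval : (Fintype.card (Fin d₂ × Fin M) : ℂ) = (d₂:ℂ) * (M:ℂ) := by
    rw [hcardval]; push_cast; ring
  rw [hNval]
  have hd20 : (d₂:ℂ) ≠ 0 := Nat.cast_ne_zero.mpr hd₂.ne'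
  have hM0 : (M:ℂ) ≠ 0 := Nat.cast_ne_zero.mpr hM.ne'
  have hdm0 : (d₂:ℂ) * (M:ℂ) ≠ 0 := mul_ne_zero hd20 hM0
  have hden : ((d₂:ℂ) * (M:ℂ)) ^ 2 - 1 ≠ 0 := by
    intro hh
    have h1 : ((d₂:ℂ) * (M:ℂ) - 1) * ((d₂:ℂ) * (M:ℂ) + 1) = 0 := by linear_combination hh
    have hne1 : (d₂:ℂ) * (M:ℂ) ≠ 1 := by
      intro hh2
      have : ((d₂ * M : ℕ) : ℂ) = ((1:ℕ) : ℂ) := by push_cast; linear_combination hh2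
      have := Nat.cast_injective this
      omega
    have hne2 : (d₂:ℂ) * (M:ℂ) + 1 ≠ 0 := by
      intro hh2
      have : ((d₂ * M + 1 : ℕ) : ℂ) = ((0:ℕ) : ℂ) := by push_cast; linear_combination hh2
      have := Nat.cast_injective this
      omega
    rcases mul_eq_zero.mp h1 with h' | h'
    · exact hne1 (by linear_combination h')
    · exact hne2 h'
  field_simp
  ring
end
end

section
/- Let d₁, d₂, M be positive integers with d₂M ≥ d₁. With U Haar-distributed on U(d₂M), V_U the first d₁ columns of U, and Φ_U(X) = Tr_M(V_U X V_U†), the average channel is the maximally depolarizing channel: for every X ∈ M_{d₁}(ℂ), ∫_{U(d₂M)} Φ_U(X) dμ(U) = Tr(X) · 𝟙_{d₂}/d₂ (the integral taken entrywise). Equivalently, the average Choi matrix satisfies ∫ J_{Φ_U} dμ(U) = 𝟙_{d₂d₁}/d₂, where J_Φ = Σ_{i,j=1}^{d₁} Φ(E_{ij}) ⊗ E_{ij}. -/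
/-!
Left invariance of the Haar measure determines the second moments
`∫ U_{pi} conj U_{qj} dμ = δ_{pq} δ_{ij} / N`: for `p ≠ q`, left multiplication by the diagonal
sign matrix flipping row `p` negates the integrand; for `p = q`, a transposition matrix shows the
integral does not depend on the row, and the columns of `U` are orthonormal. Summing these moments
over the `d₁` columns kept by the isometry gives `∫ V X V† = Tr X · 𝟙 / (d₂ M)`, and the partial trace
over `ℂ^M` turns this into `Tr X · 𝟙 / d₂`. The Choi matrix has entries `Φ(E_{ij})_{ab}`, so the
second claim is the first one for `X = E_{ij}`.
-/

open Matrix MeasureTheory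
open scoped Kronecker

noncomputable section

instance Matrix.borelSpace {m n : Type*} [Countable m] [Countable n] :
    BorelSpace (Matrix m n ℂ) :=
  inferInstanceAs (BorelSpace (m → n → ℂ))

namespace Matrix

variable {n α : Type*} [Fintype n] [DecidableEq n] [CommRing α] [StarRing α]

theorem diagonal_mem_unitaryGroup {d : n → α} (hd : ∀ i, star (d i) * d i = 1) :
    diagonal d ∈ unitaryGroup n α := by
  rw [mem_unitaryGroup_iff', star_eq_conjTranspose, diagonal_conjTranspose,
    diagonal_mul_diagonal, ← diagonal_one]
  exact congrArg diagonal (funext hd)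

theorem permMatrix_mem_unitaryGroup (σ : Equiv.Perm n) :
    σ.permMatrix α ∈ unitaryGroup n α := by
  rw [mem_unitaryGroup_iff', star_eq_conjTranspose, conjTranspose_permMatrix, ← permMatrix_mul,
    mul_inv_cancel, permMatrix_one]

end Matrix

section HaarMoments

variable {n : Type*} [Fintype n] [DecidableEq n] (μ : Measure (unitaryGroup n ℂ))

theorem continuous_unitaryGroup_entry (p q : n) :
    Continuous fun U : unitaryGroup n ℂ => (U : Matrix n n ℂ) p q :=
  continuous_subtype_val.matrix_elem p q

theorem integrable_entry_mul_conj_entry [IsFiniteMeasure μ] (p i q j : n) :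
    Integrable (fun U : unitaryGroup n ℂ =>
      (U : Matrix n n ℂ) p i * star ((U : Matrix n n ℂ) q j)) μ := by
  refine .of_bound ((continuous_unitaryGroup_entry p i).mul
    (continuous_unitaryGroup_entry q j).star).aestronglyMeasurable 1 (.of_forall fun U => ?_)
  rw [norm_mul, norm_star]
  exact mul_le_one₀ (entry_norm_bound_of_unitary U.2 p i) (norm_nonneg _)
    (entry_norm_bound_of_unitary U.2 q j)

theorem sum_entry_mul_conj_entry (U : unitaryGroup n ℂ) (i j : n) :
    ∑ r, (U : Matrix n n ℂ) r i * star ((U : Matrix n n ℂ) r j) = if i = j then 1 else 0 := by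
  have := congrFun (congrFun (UnitaryGroup.star_mul_self U) j) i
  simp only [mul_apply, star_apply, one_apply] at this
  simp_rw [mul_comm _ (star _), this, eq_comm]

variable [μ.IsMulLeftInvariant]

theorem integral_entry_mul_conj_entry_of_ne {p q : n} (hpq : p ≠ q) (i j : n) :
    ∫ U, (U : Matrix n n ℂ) p i * star ((U : Matrix n n ℂ) q j) ∂μ = 0 := by
  let S : unitaryGroup n ℂ :=
    ⟨diagonal fun r => if r = p then -1 else 1,
      diagonal_mem_unitaryGroup fun r => by split_ifs <;> simp⟩
  have hS (U : unitaryGroup n ℂ) (r s : n) :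
      ((S * U : unitaryGroup n ℂ) : Matrix n n ℂ) r s =
        (if r = p then -1 else 1) * (U : Matrix n n ℂ) r s :=
    diagonal_mul _ _ _ _
  have := integral_mul_left_eq_self (μ := μ)
    (fun U : unitaryGroup n ℂ => (U : Matrix n n ℂ) p i * star ((U : Matrix n n ℂ) q j)) S
  simp only [hS, if_pos, if_neg hpq.symm, one_mul, neg_mul, integral_neg] at this
  linear_combination (-1 / 2 : ℂ) * this

theorem integral_entry_mul_conj_entry_row_eq (p r i j : n) :
    ∫ U, (U : Matrix n n ℂ) r i * star ((U : Matrix n n ℂ) r j) ∂μ =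
      ∫ U, (U : Matrix n n ℂ) p i * star ((U : Matrix n n ℂ) p j) ∂μ := by
  let P : unitaryGroup n ℂ := ⟨_, permMatrix_mem_unitaryGroup (Equiv.swap p r)⟩
  have hP (U : unitaryGroup n ℂ) (s : n) :
      ((P * U : unitaryGroup n ℂ) : Matrix n n ℂ) p s = (U : Matrix n n ℂ) r s := by
    change ((P : Matrix n n ℂ) * (U : Matrix n n ℂ)) p s = _
    rw [PEquiv.toMatrix_toPEquiv_mul, submatrix_apply, Equiv.swap_apply_left, id]
  have := integral_mul_left_eq_self (μ := μ)
    (fun U : unitaryGroup n ℂ => (U : Matrix n n ℂ) p i * star ((U : Matrix n n ℂ) p j)) P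
  simpa only [hP] using this

theorem integral_entry_mul_conj_entry [IsProbabilityMeasure μ] (p q i j : n) :
    ∫ U, (U : Matrix n n ℂ) p i * star ((U : Matrix n n ℂ) q j) ∂μ =
      if p = q ∧ i = j then (Fintype.card n : ℂ)⁻¹ else 0 := by
  rcases eq_or_ne p q with rfl | hpq
  · have hsum := integral_finsetSum (μ := μ) Finset.univ
      fun r _ => integrable_entry_mul_conj_entry μ r i r j
    simp only [sum_entry_mul_conj_entry, integral_const, probReal_univ, one_smul,
      integral_entry_mul_conj_entry_row_eq μ p, Finset.sum_const, Finset.card_univ,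
      nsmul_eq_mul] at hsum
    simp only [true_and]
    split_ifs at hsum ⊢
    · exact (inv_eq_of_mul_eq_one_right hsum.symm).symm
    · exact (mul_eq_zero.mp hsum.symm).resolve_left
        (Nat.cast_ne_zero.mpr (Fintype.card_pos_iff.mpr ⟨p⟩).ne')
  · rw [integral_entry_mul_conj_entry_of_ne μ hpq, if_neg (hpq ·.1)]

end HaarMoments

theorem Matrix.submatrix_mul_mul_conjTranspose_apply {m n R : Type*} [Fintype m]
    [CommSemiring R] [StarRing R]
    (U : Matrix n n R) (e : m → n) (X : Matrix m m R) (p q : n) :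
    (U.submatrix id e * X * (U.submatrix id e)ᴴ) p q =
      ∑ i, ∑ j, X i j * (U p (e i) * star (U q (e j))) := by
  simp only [mul_apply, Finset.sum_mul, conjTranspose_apply, submatrix_apply, id]
  rw [Finset.sum_comm]
  exact Finset.sum_congr rfl fun _ _ => Finset.sum_congr rfl fun _ _ => by ring

section Compression

variable {m n : Type*} [Fintype m] [Fintype n] [DecidableEq n] (μ : Measure (unitaryGroup n ℂ))

theorem integrable_submatrix_mul_mul_conjTranspose_apply [IsFiniteMeasure μ] (e : m → n) (X : Matrix m m ℂ)
    (p q : n) :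
    Integrable (fun U : unitaryGroup n ℂ =>
      ((U : Matrix n n ℂ).submatrix id e * X * ((U : Matrix n n ℂ).submatrix id e)ᴴ) p q) μ := by
  simp only [submatrix_mul_mul_conjTranspose_apply]
  exact integrable_finsetSum _ fun i _ => integrable_finsetSum _ fun j _ =>
    (integrable_entry_mul_conj_entry μ p (e i) q (e j)).const_mul _

theorem integral_submatrix_mul_mul_conjTranspose_apply [IsProbabilityMeasure μ]
    [μ.IsMulLeftInvariant] {e : m → n}
    (he : Function.Injective e) (X : Matrix m m ℂ) (p q : n) :
    ∫ U, ((U : Matrix n n ℂ).submatrix id e * X * ((U : Matrix n n ℂ).submatrix id e)ᴴ) p q ∂μ =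
      if p = q then X.trace / Fintype.card n else 0 := by
  have hint (i j : m) := (integrable_entry_mul_conj_entry μ p (e i) q (e j)).const_mul (X i j)
  simp only [submatrix_mul_mul_conjTranspose_apply]
  rw [integral_finsetSum Finset.univ fun i _ => integrable_finsetSum Finset.univ fun j _ => hint i j]
  simp only [integral_finsetSum Finset.univ fun j _ => hint _ j, integral_const_mul,
    integral_entry_mul_conj_entry]
  rcases eq_or_ne p q with rfl | hpq
  · classical
    simp [he.eq_iff, trace, div_eq_mul_inv, Finset.sum_mul]
  · simp [hpq]

end Compression

theorem stinespringIsometry_eq_submatrix (d₁ d₂ M : ℕ) (h : d₁ ≤ d₂ * M)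
    (U : unitaryGroup (Fin d₂ × Fin M) ℂ) :
    stinespringIsometry d₁ d₂ M h U =
      (U : Matrix (Fin d₂ × Fin M) (Fin d₂ × Fin M) ℂ).submatrix id
        (finProdFinEquiv.symm ∘ Fin.castLE h) :=
  rfl

theorem integral_stinespringChannel_apply {d₁ d₂ M : ℕ} (hM : 0 < M) (h : d₁ ≤ d₂ * M)
    (μ : Measure (unitaryGroup (Fin d₂ × Fin M) ℂ)) [IsProbabilityMeasure μ]
    [μ.IsMulLeftInvariant] (X : Matrix (Fin d₁) (Fin d₁) ℂ) (a b : Fin d₂) :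
    ∫ U, stinespringChannel d₁ d₂ M h U X a b ∂μ =
      ((X.trace * (d₂ : ℂ)⁻¹) • (1 : Matrix (Fin d₂) (Fin d₂) ℂ)) a b := by
  have he : Function.Injective (finProdFinEquiv.symm ∘ Fin.castLE h) :=
    finProdFinEquiv.symm.injective.comp (Fin.castLE_injective h)
  simp only [stinespringChannel, ptrEnv, of_apply, stinespringIsometry_eq_submatrix]
  rw [integral_finsetSum Finset.univ fun k _ =>
    integrable_submatrix_mul_mul_conjTranspose_apply μ _ X (a, k) (b, k)]
  simp only [integral_submatrix_mul_mul_conjTranspose_apply μ he, Prod.mk.injEq, and_true]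
  rcases eq_or_ne a b with rfl | hab
  · have : (M : ℂ) ≠ 0 := Nat.cast_ne_zero.mpr hM.ne'
    simp only [if_true, Fintype.card_prod, Fintype.card_fin, Nat.cast_mul, Finset.sum_const,
      Finset.card_univ, nsmul_eq_mul, Matrix.smul_apply, one_apply_eq, smul_eq_mul, mul_one]
    field_simp
  · simp [hab]

def choiMatrix {R m k : Type*} [Semiring R] [Fintype m] [DecidableEq m]
    (Φ : Matrix m m R → Matrix k k R) : Matrix (k × m) (k × m) R :=
  ∑ i, ∑ j, Φ (single i j 1) ⊗ₖ single i j 1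

theorem choiMatrix_apply {R m k : Type*} [Semiring R] [Fintype m] [DecidableEq m]
    (Φ : Matrix m m R → Matrix k k R) (a b : k) (i j : m) :
    choiMatrix Φ (a, i) (b, j) = Φ (single i j 1) a b := by
  simp [choiMatrix, Matrix.sum_apply, kroneckerMap_apply, single_apply, ite_and]

theorem average_channel_is_depolarizing_general (d₁ d₂ M : ℕ)
    (hM : 0 < M) (h : d₁ ≤ d₂ * M)
    (μ : Measure (Matrix.unitaryGroup (Fin d₂ × Fin M) ℂ)) [IsProbabilityMeasure μ]
    (hμ : ∀ g : Matrix.unitaryGroup (Fin d₂ × Fin M) ℂ, μ.map (fun x => g * x) = μ) :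
    (∀ (X : Matrix (Fin d₁) (Fin d₁) ℂ) (a b : Fin d₂),
        ∫ U, stinespringChannel d₁ d₂ M h U X a b ∂μ =
          ((X.trace * (d₂ : ℂ)⁻¹) • (1 : Matrix (Fin d₂) (Fin d₂) ℂ)) a b) ∧
    (∀ p q : Fin d₂ × Fin d₁,
        ∫ U, (∑ i, ∑ j,
            (stinespringChannel d₁ d₂ M h U (Matrix.single i j (1 : ℂ))) ⊗ₖ
              Matrix.single i j (1 : ℂ)) p q ∂μ =
          ((d₂ : ℂ)⁻¹ • (1 : Matrix (Fin d₂ × Fin d₁) (Fin d₂ × Fin d₁) ℂ)) p q) := by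
  have : μ.IsMulLeftInvariant := ⟨hμ⟩
  refine ⟨integral_stinespringChannel_apply hM h μ, ?_⟩
  rintro ⟨a, i⟩ ⟨b, j⟩
  change ∫ U, choiMatrix (stinespringChannel d₁ d₂ M h U) (a, i) (b, j) ∂μ = _
  simp only [choiMatrix_apply, integral_stinespringChannel_apply hM h μ, Matrix.smul_apply,
    one_apply, Prod.mk.injEq, smul_eq_mul]
  rcases eq_or_ne i j with rfl | hij
  · simp [trace_single_eq_same]
  · simp [trace_single_eq_of_ne _ _ _ hij, hij]

/-- The average of a Haar-random Stinespring channel is the maximally depolarizing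
channel (entrywise); equivalently the average Choi matrix is `𝟙_{d₂d₁}/d₂`. -/
theorem average_channel_is_depolarizing (d₁ d₂ M : ℕ)
    (hd₁ : 0 < d₁) (hd₂ : 0 < d₂) (hM : 0 < M) (h : d₁ ≤ d₂ * M)
    (μ : Measure (Matrix.unitaryGroup (Fin d₂ × Fin M) ℂ)) [IsProbabilityMeasure μ]
    (hμ : ∀ g : Matrix.unitaryGroup (Fin d₂ × Fin M) ℂ, μ.map (fun x => g * x) = μ) :
    (∀ (X : Matrix (Fin d₁) (Fin d₁) ℂ) (a b : Fin d₂),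
        ∫ U, stinespringChannel d₁ d₂ M h U X a b ∂μ =
          ((X.trace * (d₂ : ℂ)⁻¹) • (1 : Matrix (Fin d₂) (Fin d₂) ℂ)) a b) ∧
    (∀ p q : Fin d₂ × Fin d₁,
        ∫ U, (∑ i, ∑ j,
            (stinespringChannel d₁ d₂ M h U (Matrix.single i j (1 : ℂ))) ⊗ₖ
              Matrix.single i j (1 : ℂ)) p q ∂μ =
          ((d₂ : ℂ)⁻¹ • (1 : Matrix (Fin d₂ × Fin d₁) (Fin d₂ × Fin d₁) ℂ)) p q) :=
  average_channel_is_depolarizing_general d₁ d₂ M hM h μ hμ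
end
end

section
/- Let d₁, d₂, M be positive integers with d₂M ≥ d₁ and let ψ ∈ ℂ^{d₁} be any fixed unit vector. With U Haar-distributed on U(d₂M), V_U the first d₁ columns of U, and Φ_U(X) = Tr_M(V_U X V_U†), the expected output purity on the pure input |ψ⟩⟨ψ| equals ∫_{U(d₂M)} Tr( Φ_U(|ψ⟩⟨ψ|)² ) dμ(U) = (d₂ + M)/(d₂M + 1). -/
open Matrix MeasureTheory
open scoped Kronecker
open scoped ComplexConjugate

noncomputable section

namespace AvgPurityAux

variable {ι : Type*} [Fintype ι] [DecidableEq ι]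

instance : BorelSpace (Matrix ι ι ℂ) := inferInstanceAs (BorelSpace (ι → ι → ℂ))
instance : BorelSpace (Matrix.unitaryGroup ι ℂ) := Subtype.borelSpace _

/-- `v w U = U *ᵥ w`. -/
def v (w : ι → ℂ) (U : Matrix.unitaryGroup ι ℂ) : ι → ℂ := (U : Matrix ι ι ℂ) *ᵥ w

lemma continuous_v (w : ι → ℂ) (p : ι) : Continuous fun U : Matrix.unitaryGroup ι ℂ => v w U p := by
  simp only [v, Matrix.mulVec, dotProduct]
  exact continuous_finset_sum _ fun j _ =>
    (continuous_subtype_val.matrix_elem p j).mul continuous_const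

lemma norm_v_le (w : ι → ℂ) (U : Matrix.unitaryGroup ι ℂ) (p : ι) :
    ‖v w U p‖ ≤ ∑ j, ‖w j‖ := by
  refine (norm_sum_le _ _).trans ?_
  refine Finset.sum_le_sum fun j _ => ?_
  rw [norm_mul]
  calc ‖(U : Matrix ι ι ℂ) p j‖ * ‖w j‖ ≤ 1 * ‖w j‖ :=
        mul_le_mul_of_nonneg_right (entry_norm_bound_of_unitary U.2 p j) (norm_nonneg _)
    _ = ‖w j‖ := one_mul _

lemma I_ne_one : Complex.I ≠ 1 := by
  intro hI
  have h2 := congrArg Complex.im hI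
  simp at h2

lemma negI_ne_one : -Complex.I ≠ 1 := by
  intro hI
  have h2 := congrArg Complex.im hI
  simp at h2

lemma neg_one_ne_one : (-1 : ℂ) ≠ 1 := by norm_num

/-- The quadruple-product integrand. -/
def P (w : ι → ℂ) (p q r s : ι) (U : Matrix.unitaryGroup ι ℂ) : ℂ :=
  v w U p * conj (v w U q) * (v w U r * conj (v w U s))

lemma continuous_P (w : ι → ℂ) (p q r s : ι) : Continuous (P w p q r s) :=
  (((continuous_v w p).mul (Complex.continuous_conj.comp (continuous_v w q))).mul
    ((continuous_v w r).mul (Complex.continuous_conj.comp (continuous_v w s))))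

lemma integrable_P (w : ι → ℂ) (μ : Measure (Matrix.unitaryGroup ι ℂ)) [IsProbabilityMeasure μ]
    (p q r s : ι) : Integrable (P w p q r s) μ := by
  set C := ∑ j, ‖w j‖ with hC
  have hC0 : 0 ≤ C := Finset.sum_nonneg fun _ _ => norm_nonneg _
  refine (integrable_const (C ^ 4)).mono' (continuous_P w p q r s).aestronglyMeasurable ?_
  refine Filter.Eventually.of_forall fun U => ?_
  have hb : ∀ x, ‖v w U x‖ ≤ C := fun x => norm_v_le w U x
  have hb' : ∀ x, ‖conj (v w U x)‖ ≤ C := fun x => by rw [RCLike.norm_conj]; exact hb x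
  calc ‖P w p q r s U‖ ≤ ‖v w U p * conj (v w U q)‖ * ‖v w U r * conj (v w U s)‖ :=
        norm_mul_le _ _
    _ ≤ (C * C) * (C * C) := by
        refine mul_le_mul ((norm_mul_le _ _).trans ?_) ((norm_mul_le _ _).trans ?_)
          (norm_nonneg _) (by positivity)
        · exact mul_le_mul (hb p) (hb' q) (norm_nonneg _) hC0
        · exact mul_le_mul (hb r) (hb' s) (norm_nonneg _) hC0
    _ = C ^ 4 := by ring

variable (w : ι → ℂ) (μ : Measure (Matrix.unitaryGroup ι ℂ))

/-- The fourth moment. -/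
def mom (p q r s : ι) : ℂ := ∫ U, P w p q r s U ∂μ

lemma integral_shift (hμ : ∀ g : Matrix.unitaryGroup ι ℂ, μ.map (fun x => g * x) = μ)
    (g : Matrix.unitaryGroup ι ℂ) (f : Matrix.unitaryGroup ι ℂ → ℂ)
    (hf : AEStronglyMeasurable f μ) : ∫ U, f (g * U) ∂μ = ∫ U, f U ∂μ := by
  have hcont : Continuous fun U : Matrix.unitaryGroup ι ℂ => g * U := by
    refine Continuous.subtype_mk ?_ _
    exact continuous_const.matrix_mul continuous_subtype_val
  conv_rhs => rw [← hμ g]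
  rw [integral_map hcont.measurable.aemeasurable]
  rw [hμ g]; exact hf

lemma sum_v_conj (hw : ∑ j, conj (w j) * w j = 1) (U : Matrix.unitaryGroup ι ℂ) :
    ∑ p, v w U p * conj (v w U p) = 1 := by
  have hU : star (U : Matrix ι ι ℂ) * (U : Matrix ι ι ℂ) = 1 := U.2.1
  have key : ∀ k j : ι, (∑ p, conj ((U : Matrix ι ι ℂ) p k) * (U : Matrix ι ι ℂ) p j)
      = if k = j then 1 else 0 := by
    intro k j
    have h1 : (star (U : Matrix ι ι ℂ) * (U : Matrix ι ι ℂ)) k j = (1 : Matrix ι ι ℂ) k j := by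
      rw [hU]
    simpa [Matrix.mul_apply, Matrix.one_apply, Matrix.star_apply, Matrix.conjTranspose_apply]
      using h1
  calc ∑ p, v w U p * conj (v w U p)
      = ∑ p, ∑ j, ∑ k, (w j * conj (w k)) *
          (conj ((U : Matrix ι ι ℂ) p k) * (U : Matrix ι ι ℂ) p j) := by
        refine Finset.sum_congr rfl fun p _ => ?_
        simp only [v, Matrix.mulVec, dotProduct, map_sum]
        rw [Finset.sum_mul_sum]
        refine Finset.sum_congr rfl fun j _ => Finset.sum_congr rfl fun k _ => ?_
        rw [_root_.map_mul]; ring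
    _ = ∑ j, ∑ k, (w j * conj (w k)) *
          ∑ p, conj ((U : Matrix ι ι ℂ) p k) * (U : Matrix ι ι ℂ) p j := by
        rw [Finset.sum_comm]
        refine Finset.sum_congr rfl fun j _ => ?_
        rw [Finset.sum_comm]
        exact Finset.sum_congr rfl fun k _ => (Finset.mul_sum _ _ _).symm
    _ = ∑ j, conj (w j) * w j := by
        refine Finset.sum_congr rfl fun j _ => ?_
        rw [Finset.sum_eq_single j]
        · rw [key, if_pos rfl, mul_one]; ring
        · intro k _ hk; rw [key, if_neg hk, mul_zero]
        · intro hj; exact absurd (Finset.mem_univ j) hj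
    _ = 1 := hw

section Phase

variable [IsProbabilityMeasure μ]

/-- Phase factor. -/
def gam (t p q r s : ι) : ℂ :=
  (if p = t then Complex.I else 1) * (if q = t then -Complex.I else 1) *
    ((if r = t then Complex.I else 1) * (if s = t then -Complex.I else 1))

lemma phase_rel (hμ : ∀ g : Matrix.unitaryGroup ι ℂ, μ.map (fun x => g * x) = μ)
    (t p q r s : ι) : mom w μ p q r s = gam t p q r s * mom w μ p q r s := by
  set d : ι → ℂ := fun j => if j = t then Complex.I else 1 with hd
  have hmem : Matrix.diagonal d ∈ Matrix.unitaryGroup ι ℂ := by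
    rw [Matrix.mem_unitaryGroup_iff']
    have : star (Matrix.diagonal d) = Matrix.diagonal (star d) := Matrix.diagonal_conjTranspose d
    rw [this, Matrix.diagonal_mul_diagonal]
    have hdd : (fun i => star d i * d i) = fun _ => (1 : ℂ) := by
      funext j
      simp only [Pi.star_apply, hd]
      split_ifs <;> simp [Complex.star_def, Complex.conj_I]
    rw [hdd]
    exact Matrix.diagonal_one
  set g : Matrix.unitaryGroup ι ℂ := ⟨Matrix.diagonal d, hmem⟩ with hg
  have hv : ∀ (U : Matrix.unitaryGroup ι ℂ) (x : ι), v w (g * U) x = d x * v w U x := by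
    intro U x
    show ((Matrix.diagonal d * (U : Matrix ι ι ℂ)) *ᵥ w) x = _
    rw [← Matrix.mulVec_mulVec, Matrix.mulVec_diagonal]
    rfl
  have hconj : ∀ x : ι, conj (d x) = if x = t then -Complex.I else 1 := by
    intro x; simp only [hd]; split_ifs <;> simp [Complex.conj_I]
  have h1 : ∫ U, P w p q r s (g * U) ∂μ = mom w μ p q r s :=
    integral_shift μ hμ g _ (continuous_P w p q r s).aestronglyMeasurable
  have h2 : ∀ U, P w p q r s (g * U) = gam t p q r s * P w p q r s U := by
    intro U
    simp only [P, hv, _root_.map_mul, hconj, gam, hd, apply_ite (starRingEnd ℂ), Complex.conj_I,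
      _root_.map_one]
    ring
  calc mom w μ p q r s = ∫ U, P w p q r s (g * U) ∂μ := h1.symm
    _ = ∫ U, gam t p q r s * P w p q r s U ∂μ := by simp only [h2]
    _ = gam t p q r s * mom w μ p q r s := integral_const_mul _ _

lemma mom_eq_zero (hμ : ∀ g : Matrix.unitaryGroup ι ℂ, μ.map (fun x => g * x) = μ)
    {t p q r s : ι} (hγ : gam t p q r s ≠ 1) : mom w μ p q r s = 0 := by
  have h := phase_rel w μ hμ t p q r s
  have h2 : (gam t p q r s - 1) * mom w μ p q r s = 0 := by linear_combination -h
  rcases mul_eq_zero.1 h2 with h3 | h3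
  · exact absurd (sub_eq_zero.1 h3) hγ
  · exact h3

end Phase

section Rotation

/-- `1/√2` as a complex number. -/
def cc : ℂ := ((Real.sqrt 2)⁻¹ : ℝ)

lemma hcc : cc * cc = 1/2 := by
  have h : (Real.sqrt 2)⁻¹ * (Real.sqrt 2)⁻¹ = 1/2 := by
    rw [← mul_inv, Real.mul_self_sqrt (by norm_num)]; norm_num
  unfold cc
  rw [← Complex.ofReal_mul, h]
  push_cast
  ring

lemma conj_cc : conj cc = cc := by unfold cc; exact Complex.conj_ofReal _

/-- The rotation by `π/4` in the `t,u` coordinate plane. -/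
def grot (t u : ι) : Matrix ι ι ℂ :=
  1 + (cc - 1) • Matrix.single t t (1:ℂ) + cc • Matrix.single t u (1:ℂ)
    + cc • Matrix.single u t (1:ℂ) + (-cc - 1) • Matrix.single u u (1:ℂ)

omit [Fintype ι] in
lemma Estd_conjT (i j : ι) (c : ℂ) :
    (Matrix.single i j c)ᴴ = Matrix.single j i (conj c) := by
  ext a b
  simp only [conjTranspose_apply, Matrix.single, of_apply, RCLike.star_def,
    apply_ite (starRingEnd ℂ), map_zero, and_comm]

lemma grot_sym (t u : ι) : (grot t u)ᴴ = grot t u := by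
  unfold grot
  simp only [conjTranspose_add, conjTranspose_smul, Estd_conjT, _root_.map_one,
    conjTranspose_one, RCLike.star_def, map_sub, map_neg, conj_cc, _root_.map_one]
  abel

lemma grot_mul_self (t u : ι) (h : t ≠ u) : grot t u * grot t u = 1 := by
  have h2 := hcc
  have hz1 : ∀ (i l : ι) (c d : ℂ), Matrix.single i u c * Matrix.single t l d = 0 :=
    fun i l c d => Matrix.single_mul_single_of_ne c i u t h.symm d
  have hz2 : ∀ (i l : ι) (c d : ℂ), Matrix.single i t c * Matrix.single u l d = 0 :=
    fun i l c d => Matrix.single_mul_single_of_ne c i t u h d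
  unfold grot
  simp only [add_mul, mul_add, one_mul, mul_one, smul_mul_assoc, mul_smul_comm, smul_smul,
    Matrix.single_mul_single_same, hz1, hz2, smul_zero, add_zero, zero_add, mul_one]
  have h4 : cc ^ 2 = 1 / 2 := by rw [sq]; exact h2
  match_scalars <;> (ring_nf; try rw [h4]; try ring)

lemma grot_mem (t u : ι) (h : t ≠ u) : grot t u ∈ Matrix.unitaryGroup ι ℂ := by
  rw [Matrix.mem_unitaryGroup_iff, Matrix.star_eq_conjTranspose, grot_sym]
  exact grot_mul_self t u h

omit [Fintype ι] in
lemma E_mulVec [Fintype ι] (i j : ι) (c : ℂ) (y : ι → ℂ) (k : ι) :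
    (Matrix.single i j c *ᵥ y) k = if i = k then c * y j else 0 := by
  simp only [Matrix.mulVec, dotProduct, Matrix.single, of_apply, ite_and,
    ite_mul, zero_mul]
  by_cases hik : i = k
  · subst hik
    simp
  · simp [hik]

end Rotation

section RotMom

variable [IsProbabilityMeasure μ]

lemma mom_perm1 (p q : ι) : mom w μ p q q p = mom w μ p p q q := by
  unfold mom; congr 1; funext U; unfold P; ring

lemma mom_perm2 (p q : ι) : mom w μ q q p p = mom w μ p p q q := by
  unfold mom; congr 1; funext U; unfold P; ring

lemma mom_perm3 (p q : ι) : mom w μ q p p q = mom w μ p p q q := by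
  unfold mom; congr 1; funext U; unfold P; ring

lemma v_grot (t u : ι) (h : t ≠ u) (U : Matrix.unitaryGroup ι ℂ) :
    (v w (⟨grot t u, grot_mem t u h⟩ * U) t = cc * v w U t + cc * v w U u) ∧
    (v w (⟨grot t u, grot_mem t u h⟩ * U) u = cc * v w U t - cc * v w U u) := by
  have hv : ∀ x, v w ((⟨grot t u, grot_mem t u h⟩ : Matrix.unitaryGroup ι ℂ) * U) x
      = (grot t u *ᵥ v w U) x := by
    intro x
    show ((grot t u * (U : Matrix ι ι ℂ)) *ᵥ w) x = _
    rw [← Matrix.mulVec_mulVec]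
    rfl
  constructor <;> rw [hv] <;>
    simp only [grot, Matrix.add_mulVec, Matrix.smul_mulVec, Matrix.one_mulVec,
      E_mulVec, Pi.add_apply, Pi.smul_apply, smul_eq_mul, if_pos rfl, if_neg h,
      if_neg (Ne.symm h), one_mul, mul_zero, add_zero, mul_ite, mul_one, if_true] <;>
    ring

lemma rot_main (hμ : ∀ g : Matrix.unitaryGroup ι ℂ, μ.map (fun x => g * x) = μ)
    (t u : ι) (h : t ≠ u) :
    mom w μ t t t t = mom w μ u u u u ∧ mom w μ t t u u = (1/2) * mom w μ t t t t := by
  set gR : Matrix.unitaryGroup ι ℂ := ⟨grot t u, grot_mem t u h⟩ with hgR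
  have hvt : ∀ U, v w (gR * U) t = cc * v w U t + cc * v w U u :=
    fun U => (v_grot w t u h U).1
  have hvu : ∀ U, v w (gR * U) u = cc * v w U t - cc * v w U u :=
    fun U => (v_grot w t u h U).2
  have hshift : ∀ p q r s : ι, ∫ U, P w p q r s (gR * U) ∂μ = mom w μ p q r s :=
    fun p q r s => integral_shift μ hμ gR _ (continuous_P w p q r s).aestronglyMeasurable
  have hconj : ∀ U x y, conj (cc * v w U x + cc * v w U y)
      = cc * conj (v w U x) + cc * conj (v w U y) := by
    intro U x y; rw [map_add, _root_.map_mul, _root_.map_mul, conj_cc]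
  have hconj' : ∀ U x y, conj (cc * v w U x - cc * v w U y)
      = cc * conj (v w U x) - cc * conj (v w U y) := by
    intro U x y; rw [map_sub, _root_.map_mul, _root_.map_mul, conj_cc]
  have hz : ∀ p q r s : ι, gam t p q r s ≠ 1 → mom w μ p q r s = 0 :=
    fun p q r s hne => mom_eq_zero w μ hμ hne
  -- the two vanishing moments in the second equation
  have ztutu : mom w μ t u t u = 0 := by
    refine hz t u t u ?_
    simp only [gam, if_pos rfl, if_neg (Ne.symm h)]
    simp [Complex.I_mul_I]
    norm_num
  have zutut : mom w μ u t u t = 0 := by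
    refine hz u t u t ?_
    simp only [gam, if_pos rfl, if_neg (Ne.symm h)]
    simp [Complex.I_mul_I]
    norm_num
  -- equation 2 : C = (A + B)/4
  have hpt2 : ∀ U, P w t t u u (gR * U)
      = (1/4) * (P w t t t t U + P w u u u u U - P w t u t u U - P w u t u t U) := by
    intro U
    unfold P
    rw [hvt, hvu, hconj, hconj']
    linear_combination ((cc * cc + 1/2) * ((v w U t + v w U u) * (conj (v w U t) + conj (v w U u))
      * ((v w U t - v w U u) * (conj (v w U t) - conj (v w U u))))) * hcc
  have hC : mom w μ t t u u = (1/4) * (mom w μ t t t t + mom w μ u u u u) := by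
    have : mom w μ t t u u = ∫ U, (1/4 : ℂ) * (P w t t t t U + P w u u u u U
        - P w t u t u U - P w u t u t U) ∂μ := by
      rw [← hshift t t u u]
      exact integral_congr_ae (Filter.Eventually.of_forall fun U => hpt2 U)
    rw [this, integral_const_mul, integral_sub, integral_sub, integral_add]
    · show (1/4 : ℂ) * (mom w μ t t t t + mom w μ u u u u - mom w μ t u t u - mom w μ u t u t)
        = _
      rw [ztutu, zutut]; ring
    · exact integrable_P w μ t t t t
    · exact integrable_P w μ u u u u
    · exact (integrable_P w μ t t t t).add (integrable_P w μ u u u u)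
    · exact integrable_P w μ t u t u
    · exact ((integrable_P w μ t t t t).add (integrable_P w μ u u u u)).sub
        (integrable_P w μ t u t u)
    · exact integrable_P w μ u t u t
  -- equation 1 : A = (1/4) * (sum of sixteen moments)
  have hpt1 : ∀ U, P w t t t t (gR * U)
      = (1/4) * ∑ x ∈ ({t,u} : Finset ι), ∑ y ∈ ({t,u} : Finset ι),
          ∑ z ∈ ({t,u} : Finset ι), ∑ p ∈ ({t,u} : Finset ι), P w x y z p U := by
    intro U
    simp only [Finset.sum_pair h]
    unfold P
    rw [hvt, hconj]
    linear_combination ((cc * cc + 1/2) * ((v w U t + v w U u) * (conj (v w U t) + conj (v w U u))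
      * ((v w U t + v w U u) * (conj (v w U t) + conj (v w U u))))) * hcc
  have hA : mom w μ t t t t = (1/4) * ∑ x ∈ ({t,u} : Finset ι), ∑ y ∈ ({t,u} : Finset ι),
      ∑ z ∈ ({t,u} : Finset ι), ∑ p ∈ ({t,u} : Finset ι), mom w μ x y z p := by
    have h1 : mom w μ t t t t = ∫ U, (1/4 : ℂ) * ∑ x ∈ ({t,u} : Finset ι),
        ∑ y ∈ ({t,u} : Finset ι), ∑ z ∈ ({t,u} : Finset ι), ∑ p ∈ ({t,u} : Finset ι),
          P w x y z p U ∂μ := by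
      rw [← hshift t t t t]
      exact integral_congr_ae (Filter.Eventually.of_forall fun U => hpt1 U)
    rw [h1, integral_const_mul]
    congr 1
    rw [integral_finset_sum _ fun x _ => integrable_finset_sum _ fun y _ =>
      integrable_finset_sum _ fun z _ => integrable_finset_sum _ fun p _ => integrable_P w μ x y z p]
    refine Finset.sum_congr rfl fun x _ => ?_
    rw [integral_finset_sum _ fun y _ => integrable_finset_sum _ fun z _ =>
      integrable_finset_sum _ fun p _ => integrable_P w μ x y z p]
    refine Finset.sum_congr rfl fun y _ => ?_
    rw [integral_finset_sum _ fun z _ => integrable_finset_sum _ fun p _ => integrable_P w μ x y z p]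
    refine Finset.sum_congr rfl fun z _ => ?_
    exact integral_finset_sum _ fun p _ => integrable_P w μ x y z p
  -- kill the ten vanishing terms and identify the rest
  have hne1 : ∀ (q s : ι), q ≠ t → mom w μ t q t s = 0 := by
    intro q s hq
    refine hz t q t s ?_
    simp only [gam, if_pos rfl, if_neg hq]
    by_cases hs : s = t <;> simp [hs, Complex.I_mul_I, I_ne_one] <;> try norm_num
  have negI_ne_one : -Complex.I ≠ 1 := by
    intro hI
    have h2 := congrArg Complex.im hI
    simp at h2
  have z2 : mom w μ t t t u = 0 := hz _ _ _ _ (by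
    simp [gam, h.symm, Complex.I_mul_I, I_ne_one, negI_ne_one, mul_neg, neg_mul, neg_neg])
  have z3 : mom w μ t t u t = 0 := hz _ _ _ _ (by
    simp [gam, h.symm, Complex.I_mul_I, I_ne_one, negI_ne_one, mul_neg, neg_mul, neg_neg])
  have z5 : mom w μ t u t t = 0 := hne1 u t h.symm
  have z8 : mom w μ t u u u = 0 := hz _ _ _ _ (by
    simp [gam, h.symm, Complex.I_mul_I, I_ne_one, negI_ne_one, mul_neg, neg_mul, neg_neg])
  have z9 : mom w μ u t t t = 0 := hz _ _ _ _ (by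
    simp [gam, h.symm, Complex.I_mul_I, I_ne_one, negI_ne_one, mul_neg, neg_mul, neg_neg])
  have z12 : mom w μ u t u u = 0 := hz _ _ _ _ (by
    simp [gam, h.symm, Complex.I_mul_I, I_ne_one, negI_ne_one, mul_neg, neg_mul, neg_neg])
  have z14 : mom w μ u u t u = 0 := hz _ _ _ _ (by
    simp [gam, h.symm, Complex.I_mul_I, I_ne_one, negI_ne_one, mul_neg, neg_mul, neg_neg])
  have z15 : mom w μ u u u t = 0 := hz _ _ _ _ (by
    simp [gam, h.symm, Complex.I_mul_I, I_ne_one, negI_ne_one, mul_neg, neg_mul, neg_neg])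
  simp only [Finset.sum_pair h] at hA
  rw [z2, z3, z5, z8, z9, z12, z14, z15, ztutu, zutut, mom_perm1 w μ t u, mom_perm3 w μ t u,
    mom_perm2 w μ t u] at hA
  constructor
  · linear_combination 2 * hA + 2 * hC
  · linear_combination (-1/2 : ℂ) * hA + (1/2 : ℂ) * hC

end RotMom

section Formula

variable [IsProbabilityMeasure μ] [Nonempty ι]

lemma sum_mom_eq_one (hw : ∑ j, conj (w j) * w j = 1) :
    ∑ p : ι, ∑ r : ι, mom w μ p p r r = 1 := by
  have hpt : ∀ U : Matrix.unitaryGroup ι ℂ, ∑ p : ι, ∑ r : ι, P w p p r r U = 1 := by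
    intro U
    have h1 := sum_v_conj w hw U
    calc ∑ p : ι, ∑ r : ι, P w p p r r U
        = (∑ p, v w U p * conj (v w U p)) * (∑ r, v w U r * conj (v w U r)) := by
          rw [Finset.sum_mul_sum]
          rfl
      _ = 1 := by rw [h1, one_mul]
  calc ∑ p : ι, ∑ r : ι, mom w μ p p r r
      = ∫ U, ∑ p : ι, ∑ r : ι, P w p p r r U ∂μ := by
        rw [integral_finset_sum _ fun p _ => integrable_finset_sum _ fun r _ =>
          integrable_P w μ p p r r]
        exact Finset.sum_congr rfl fun p _ =>
          (integral_finset_sum _ fun r _ => integrable_P w μ p p r r).symm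
    _ = ∫ _U, (1 : ℂ) ∂μ := integral_congr_ae (Filter.Eventually.of_forall hpt)
    _ = 1 := by simp

lemma mom_formula (hμ : ∀ g : Matrix.unitaryGroup ι ℂ, μ.map (fun x => g * x) = μ)
    (hw : ∑ j, conj (w j) * w j = 1) (p q r s : ι) :
    mom w μ p q r s = ((if p = q ∧ r = s then 1 else 0) + (if p = s ∧ q = r then 1 else 0)) /
      ((Fintype.card ι : ℂ) * ((Fintype.card ι : ℂ) + 1)) := by
  set n : ℂ := (Fintype.card ι : ℂ) with hn
  have hn0 : n ≠ 0 := Nat.cast_ne_zero.2 Fintype.card_ne_zero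
  have hnn1 : n + 1 ≠ 0 := by
    have : ((Fintype.card ι + 1 : ℕ) : ℂ) ≠ 0 := Nat.cast_ne_zero.2 (Nat.succ_ne_zero _)
    rwa [Nat.cast_add, Nat.cast_one] at this
  have hn1 : n * (n + 1) ≠ 0 := mul_ne_zero hn0 hnn1
  set t₀ : ι := Classical.arbitrary ι with ht₀
  set α : ℂ := mom w μ t₀ t₀ t₀ t₀ with hα0
  have hdiag : ∀ x : ι, mom w μ x x x x = α := by
    intro x
    by_cases hx : x = t₀
    · rw [hx]
    · exact (rot_main w μ hμ x t₀ hx).1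
  have hoff : ∀ x y : ι, x ≠ y → mom w μ x x y y = (1/2) * α := by
    intro x y hxy
    have h2 := (rot_main w μ hμ x y hxy).2
    rwa [hdiag x] at h2
  have hsum := sum_mom_eq_one w μ hw
  have hval : ∀ x y : ι, mom w μ x x y y = (1/2) * α + if x = y then (1/2) * α else 0 := by
    intro x y
    by_cases hxy : x = y
    · subst hxy; rw [if_pos rfl, hdiag]; ring
    · rw [if_neg hxy, hoff x y hxy]; ring
  rw [Finset.sum_congr rfl (fun x _ => Finset.sum_congr rfl fun y _ => hval x y)] at hsum
  simp only [Finset.sum_add_distrib, Finset.sum_ite_eq, Finset.mem_univ, if_true,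
    Finset.sum_const, Finset.card_univ, nsmul_eq_mul] at hsum
  have hα : α = 2 / (n * (n + 1)) := by
    rw [eq_div_iff hn1]
    linear_combination 2 * hsum
  have hz : ∀ t : ι, gam t p q r s ≠ 1 → mom w μ p q r s = 0 :=
    fun t => mom_eq_zero w μ hμ
  by_cases h1 : p = q ∧ r = s
  · obtain ⟨hq, hs⟩ := h1
    subst hq; subst hs
    by_cases h2 : p = r
    · subst h2
      rw [hdiag, hα]
      simp only [and_self, eq_self_iff_true, if_true]
      ring
    · rw [hoff p r h2, hα]
      simp only [and_self, eq_self_iff_true, if_true, h2, if_false]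
      ring
  · by_cases h2 : p = s ∧ q = r
    · obtain ⟨hs, hr⟩ := h2
      subst hs; subst hr
      have hpq : p ≠ q := fun hc => h1 ⟨hc, hc.symm⟩
      rw [mom_perm1 w μ p q, hoff p q hpq, hα, if_neg h1]
      simp only [and_self, eq_self_iff_true, if_true]
      ring
    · rw [if_neg h1, if_neg h2]
      rw [show ((0 : ℂ) + 0) / (n * (n+1)) = 0 by ring]
      by_cases hpq : p = q
      · subst hpq
        have hrs : r ≠ s := fun hc => h1 ⟨rfl, hc⟩
        by_cases hrp : r = p
        · subst hrp
          refine hz r ?_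
          have hsp : ¬(s = r) := fun hc => hrs hc.symm
          simp [gam, hsp, Complex.I_mul_I, I_ne_one, negI_ne_one, mul_neg, neg_mul, neg_neg]
        · refine hz r ?_
          have hp : ¬(p = r) := fun hc => hrp hc.symm
          have hs : ¬(s = r) := fun hc => hrs hc.symm
          simp [gam, hp, hs, Complex.I_mul_I, I_ne_one, negI_ne_one, mul_neg, neg_mul, neg_neg]
      · by_cases hps : p = s
        · subst hps
          have hqr : q ≠ r := fun hc => h2 ⟨rfl, hc⟩
          refine hz q ?_
          have h3 : ¬(p = q) := hpq
          have h4 : ¬(r = q) := fun hc => hqr hc.symm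
          simp [gam, h3, h4, Complex.I_mul_I, I_ne_one, negI_ne_one, mul_neg, neg_mul, neg_neg]
        · refine hz p ?_
          have h3 : ¬(q = p) := fun hc => hpq hc.symm
          have h4 : ¬(s = p) := fun hc => hps hc.symm
          by_cases hrp : r = p <;>
            simp [gam, h3, h4, hrp, Complex.I_mul_I, I_ne_one, negI_ne_one, mul_neg, neg_mul,
              neg_neg] <;> norm_num

end Formula

end AvgPurityAux

/-- The expected output purity of a Haar-random Stinespring channel on a fixed pure
input equals `(d₂ + M)/(d₂M + 1)`. -/
theorem average_output_purity (d₁ d₂ M : ℕ)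
    (hd₁ : 0 < d₁) (hd₂ : 0 < d₂) (hM : 0 < M) (h : d₁ ≤ d₂ * M)
    (ψ : Fin d₁ → ℂ) (hψ : ∑ i, starRingEnd ℂ (ψ i) * ψ i = 1)
    (μ : Measure (Matrix.unitaryGroup (Fin d₂ × Fin M) ℂ)) [IsProbabilityMeasure μ]
    (hμ : ∀ g : Matrix.unitaryGroup (Fin d₂ × Fin M) ℂ, μ.map (fun x => g * x) = μ) :
    ∫ U, ((stinespringChannel d₁ d₂ M h U (vecMulVec ψ (star ψ))) *
        (stinespringChannel d₁ d₂ M h U (vecMulVec ψ (star ψ)))).trace ∂μ =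
      ((d₂ : ℂ) + (M : ℂ)) / ((d₂ : ℂ) * (M : ℂ) + 1) := by
  classical
  open AvgPurityAux in
  set ι := (Fin d₂ × Fin M)
  have hne : Nonempty ι := ⟨(⟨0, hd₂⟩, ⟨0, hM⟩)⟩
  set e : Fin d₁ → ι := fun i => finProdFinEquiv.symm (Fin.castLE h i) with he_def
  have he : Function.Injective e := fun i i' hii => by
    have h2 : (Fin.castLE h i : Fin (d₂ * M)) = Fin.castLE h i' :=
      finProdFinEquiv.symm.injective hii
    exact Fin.castLE_injective h h2
  set w : ι → ℂ := fun j => ∑ i, if j = e i then ψ i else 0 with hw_def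
  have hwe : ∀ i, w (e i) = ψ i := by
    intro i
    show (∑ i' : Fin d₁, if e i = e i' then ψ i' else 0) = ψ i
    rw [Finset.sum_eq_single i]
    · rw [if_pos rfl]
    · intro i' _ hne'
      exact if_neg fun hc => hne' (he hc).symm
    · intro hmem; exact absurd (Finset.mem_univ i) hmem
  have hw0 : ∀ j, (∀ i, j ≠ e i) → w j = 0 := by
    intro j hj
    rw [hw_def]
    exact Finset.sum_eq_zero fun i _ => if_neg (hj i)
  have hw : ∑ j, conj (w j) * w j = 1 := by
    have hsub : ∑ j, conj (w j) * w j = ∑ j ∈ Finset.univ.image e, conj (w j) * w j := by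
      refine (Finset.sum_subset (Finset.subset_univ _) fun j _ hj => ?_).symm
      have : w j = 0 := hw0 j fun i hc => hj (by rw [hc]; exact Finset.mem_image_of_mem e (Finset.mem_univ i))
      rw [this, mul_zero]
    rw [hsub, Finset.sum_image fun i _ i' _ hii => he hii]
    simp only [hwe]
    exact hψ
  -- identify `v`
  have hvV : ∀ (U : Matrix.unitaryGroup ι ℂ) (p : ι),
      ∑ i, stinespringIsometry d₁ d₂ M h U p i * ψ i = v w U p := by
    intro U p
    have : v w U p = ∑ j, ∑ i, if j = e i then (U : Matrix ι ι ℂ) p j * ψ i else 0 := by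
      simp only [v, Matrix.mulVec, dotProduct, hw_def, Finset.mul_sum, mul_ite, mul_zero]
    rw [this, Finset.sum_comm]
    refine Finset.sum_congr rfl fun i _ => ?_
    rw [Finset.sum_ite_eq' Finset.univ (e i) (fun j => (U : Matrix ι ι ℂ) p j * ψ i)]
    rw [if_pos (Finset.mem_univ _)]
    rfl
  -- the channel entries
  have hch : ∀ (U : Matrix.unitaryGroup ι ℂ) (pp qq : ι),
      (stinespringIsometry d₁ d₂ M h U * vecMulVec ψ (star ψ) *
        (stinespringIsometry d₁ d₂ M h U)ᴴ) pp qq = v w U pp * conj (v w U qq) := by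
    intro U pp qq
    set V := stinespringIsometry d₁ d₂ M h U with hV
    rw [Matrix.mul_apply]
    have h1 : ∀ jj, (V * vecMulVec ψ (star ψ)) pp jj
        = (∑ ii, V pp ii * ψ ii) * conj (ψ jj) := by
      intro jj
      rw [Matrix.mul_apply, Finset.sum_mul]
      refine Finset.sum_congr rfl fun ii _ => ?_
      simp only [Matrix.vecMulVec_apply, Pi.star_apply, RCLike.star_def]
      ring
    simp only [h1, Matrix.conjTranspose_apply, RCLike.star_def]
    rw [← hvV U pp, ← hvV U qq, map_sum, Finset.mul_sum]
    refine Finset.sum_congr rfl fun jj _ => ?_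
    rw [_root_.map_mul]
    ring
  -- pointwise purity
  have hPt : ∀ U : Matrix.unitaryGroup ι ℂ,
      ((stinespringChannel d₁ d₂ M h U (vecMulVec ψ (star ψ))) *
        (stinespringChannel d₁ d₂ M h U (vecMulVec ψ (star ψ)))).trace
      = ∑ a : Fin d₂, ∑ b : Fin d₂, ∑ k : Fin M, ∑ l : Fin M,
          P w (a, k) (b, k) (b, l) (a, l) U := by
    intro U
    rw [Matrix.trace]
    simp only [Matrix.diag_apply, Matrix.mul_apply]
    refine Finset.sum_congr rfl fun a _ => Finset.sum_congr rfl fun b _ => ?_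
    show stinespringChannel d₁ d₂ M h U (vecMulVec ψ (star ψ)) a b *
      stinespringChannel d₁ d₂ M h U (vecMulVec ψ (star ψ)) b a = _
    have hab : ∀ x y : Fin d₂, stinespringChannel d₁ d₂ M h U (vecMulVec ψ (star ψ)) x y
        = ∑ k : Fin M, v w U (x, k) * conj (v w U (y, k)) := by
      intro x y
      show ∑ k : Fin M, _ = _
      exact Finset.sum_congr rfl fun k _ => hch U (x, k) (y, k)
    rw [hab a b, hab b a, Finset.sum_mul_sum]
    rfl
  have hμtot := hμ
  -- integrate
  calc ∫ U, ((stinespringChannel d₁ d₂ M h U (vecMulVec ψ (star ψ))) *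
        (stinespringChannel d₁ d₂ M h U (vecMulVec ψ (star ψ)))).trace ∂μ
      = ∫ U, ∑ a : Fin d₂, ∑ b : Fin d₂, ∑ k : Fin M, ∑ l : Fin M,
          P w (a, k) (b, k) (b, l) (a, l) U ∂μ :=
        integral_congr_ae (Filter.Eventually.of_forall hPt)
    _ = ∑ a : Fin d₂, ∑ b : Fin d₂, ∑ k : Fin M, ∑ l : Fin M,
          mom w μ (a, k) (b, k) (b, l) (a, l) := by
        rw [integral_finset_sum _ fun a _ => integrable_finset_sum _ fun b _ =>
          integrable_finset_sum _ fun k _ => integrable_finset_sum _ fun l _ =>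
            integrable_P w μ _ _ _ _]
        refine Finset.sum_congr rfl fun a _ => ?_
        rw [integral_finset_sum _ fun b _ => integrable_finset_sum _ fun k _ =>
          integrable_finset_sum _ fun l _ => integrable_P w μ _ _ _ _]
        refine Finset.sum_congr rfl fun b _ => ?_
        rw [integral_finset_sum _ fun k _ => integrable_finset_sum _ fun l _ =>
          integrable_P w μ _ _ _ _]
        refine Finset.sum_congr rfl fun k _ => ?_
        exact integral_finset_sum _ fun l _ => integrable_P w μ _ _ _ _
    _ = ∑ a : Fin d₂, ∑ b : Fin d₂, ∑ k : Fin M, ∑ l : Fin M,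
          (((if a = b then (1:ℂ) else 0) + if k = l then 1 else 0) /
            ((d₂ * M : ℂ) * ((d₂ * M : ℂ) + 1))) := by
        refine Finset.sum_congr rfl fun a _ => Finset.sum_congr rfl fun b _ =>
          Finset.sum_congr rfl fun k _ => Finset.sum_congr rfl fun l _ => ?_
        rw [mom_formula w μ hμ hw]
        have hcard : (Fintype.card ι : ℂ) = (d₂ * M : ℂ) := by
          simp [ι, Fintype.card_prod]
        rw [hcard]
        congr 1
        have hC1 : ((a,k) = (b,k) ∧ (b,l) = (a,l)) ↔ a = b := by
          constructor
          · exact fun hc => congrArg Prod.fst hc.1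
          · rintro rfl; exact ⟨rfl, rfl⟩
        have hC2 : ((a,k) = (a,l) ∧ (b,k) = (b,l)) ↔ k = l := by
          constructor
          · exact fun hc => congrArg Prod.snd hc.1
          · rintro rfl; exact ⟨rfl, rfl⟩
        rw [if_congr hC1 rfl rfl, if_congr hC2 rfl rfl]
    _ = ((d₂ : ℂ) + (M : ℂ)) / ((d₂ : ℂ) * (M : ℂ) + 1) := by
        have e1 : ∑ a : Fin d₂, ∑ b : Fin d₂, ∑ k : Fin M, ∑ l : Fin M,
            (((if a = b then (1:ℂ) else 0) + if k = l then 1 else 0) /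
              ((d₂ * M : ℂ) * ((d₂ * M : ℂ) + 1)))
            = (∑ a : Fin d₂, ∑ b : Fin d₂, ∑ k : Fin M, ∑ l : Fin M,
              ((if a = b then (1:ℂ) else 0) + if k = l then 1 else 0)) /
              ((d₂ * M : ℂ) * ((d₂ * M : ℂ) + 1)) := by
          simp only [Finset.sum_div]
        rw [e1]
        have e2 : ∑ a : Fin d₂, ∑ b : Fin d₂, ∑ k : Fin M, ∑ l : Fin M,
            ((if a = b then (1:ℂ) else 0) + if k = l then 1 else 0)
            = (d₂ : ℂ) * M * M + (d₂ : ℂ) * d₂ * M := by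
          simp [Finset.sum_add_distrib, Finset.sum_ite_eq, Finset.sum_const, Finset.card_univ,
            nsmul_eq_mul]
          ring
        rw [e2]
        have hd2 : (d₂ : ℂ) ≠ 0 := Nat.cast_ne_zero.2 hd₂.ne'
        have hM' : (M : ℂ) ≠ 0 := Nat.cast_ne_zero.2 hM.ne'
        have hden : (d₂ : ℂ) * (M : ℂ) + 1 ≠ 0 := by
          have h9 : ((d₂ * M + 1 : ℕ) : ℂ) ≠ 0 := Nat.cast_ne_zero.2 (Nat.succ_ne_zero _)
          push_cast at h9
          exact h9
        field_simp
        ring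
end
end

section
/- Let d and M be positive integers with dM ≥ 2. With U Haar-distributed on U(dM), V_U the first d columns of U, and Φ_U(X) = Tr_M(V_U X V_U†), the expected squared Hilbert–Schmidt distance between the image of the maximally mixed state and the maximally mixed state equals ∫_{U(dM)} Tr( (Φ_U(𝟙_d/d) − 𝟙_d/d)² ) dμ(U) = (d² − 1)(M − 1) / ( d (d²M² − 1) ). In particular, when M = t d² for a constant t > 0, this equals (d² − 1)(t d² − 1)/( d (t² d⁶ − 1) ) ~ 1/(t d³) as d → ∞. -/
set_option synthInstance.maxHeartbeats 1000000
set_option maxHeartbeats 1000000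

open Matrix MeasureTheory Complex
open scoped ComplexConjugate

noncomputable section

namespace AvgNonunit

variable {d M : ℕ}

/-- embedding of column indices -/
def emb (h : d ≤ d * M) (i : Fin d) : Fin d × Fin M := finProdFinEquiv.symm (Fin.castLE h i)

lemma emb_inj (h : d ≤ d * M) : Function.Injective (emb h) := fun i j hij => by
  have := finProdFinEquiv.symm.injective hij
  exact Fin.castLE_injective h this

/-- rotated projection entries -/
def P (h : d ≤ d * M) (U : Matrix.unitaryGroup (Fin d × Fin M) ℂ) (x y : Fin d × Fin M) : ℂ :=
  ∑ i : Fin d, (U : Matrix (Fin d × Fin M) (Fin d × Fin M) ℂ) x (emb h i) *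
    conj ((U : Matrix (Fin d × Fin M) (Fin d × Fin M) ℂ) y (emb h i))

lemma meas_entry (x c : Fin d × Fin M) :
    Measurable (fun U : Matrix.unitaryGroup (Fin d × Fin M) ℂ =>
      (U : Matrix (Fin d × Fin M) (Fin d × Fin M) ℂ) x c) :=
  ((measurable_subtype_coe (α := Matrix (Fin d × Fin M) (Fin d × Fin M) ℂ)).eval).eval

lemma meas_P (h : d ≤ d * M) (x y : Fin d × Fin M) :
    Measurable (fun U => P h U x y) := by
  apply Finset.measurable_sum
  intro i _
  exact (meas_entry x _).mul ((RCLike.continuous_conj.measurable).comp (meas_entry y _))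

lemma entry_bound (U : Matrix.unitaryGroup (Fin d × Fin M) ℂ) (x c : Fin d × Fin M) :
    ‖(U : Matrix (Fin d × Fin M) (Fin d × Fin M) ℂ) x c‖ ≤ 1 := by
  have h1 : ((U : Matrix (Fin d × Fin M) (Fin d × Fin M) ℂ) * star (U : Matrix (Fin d × Fin M) (Fin d × Fin M) ℂ)) x x = 1 := by
    rw [U.2.2]; simp
  rw [Matrix.mul_apply] at h1
  have h2 : ∀ c', (U : Matrix (Fin d × Fin M) (Fin d × Fin M) ℂ) x c' *
      star ((U : Matrix (Fin d × Fin M) (Fin d × Fin M) ℂ)) c' x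
      = (Complex.normSq ((U : Matrix (Fin d × Fin M) (Fin d × Fin M) ℂ) x c') : ℂ) := by
    intro c'
    simp [Matrix.star_apply, Complex.mul_conj]
  rw [Finset.sum_congr rfl fun c' _ => h2 c'] at h1
  have h3 : ∑ c', Complex.normSq ((U : Matrix (Fin d × Fin M) (Fin d × Fin M) ℂ) x c') = 1 := by
    have := congrArg Complex.re h1
    simpa [Complex.ofReal_sum] using this
  have h4 : Complex.normSq ((U : Matrix (Fin d × Fin M) (Fin d × Fin M) ℂ) x c) ≤ 1 := by
    rw [← h3]
    exact Finset.single_le_sum (fun i _ => Complex.normSq_nonneg _) (Finset.mem_univ c)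
  have := Complex.normSq_eq_norm_sq ((U : Matrix (Fin d × Fin M) (Fin d × Fin M) ℂ) x c)
  nlinarith [norm_nonneg ((U : Matrix (Fin d × Fin M) (Fin d × Fin M) ℂ) x c)]

lemma P_bound (h : d ≤ d * M) (U : Matrix.unitaryGroup (Fin d × Fin M) ℂ) (x y : Fin d × Fin M) :
    ‖P h U x y‖ ≤ d := by
  calc ‖P h U x y‖ ≤ ∑ i : Fin d, ‖(U : Matrix (Fin d × Fin M) (Fin d × Fin M) ℂ) x (emb h i) *
      conj ((U : Matrix (Fin d × Fin M) (Fin d × Fin M) ℂ) y (emb h i))‖ := norm_sum_le _ _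
    _ ≤ ∑ _i : Fin d, 1 := by
        apply Finset.sum_le_sum
        intro i _
        rw [norm_mul]
        calc ‖_‖ * ‖conj ((U : Matrix (Fin d × Fin M) (Fin d × Fin M) ℂ) y (emb h i))‖
            ≤ 1 * 1 := by
              apply mul_le_mul (entry_bound U x _) ?_ (norm_nonneg _) zero_le_one
              rw [RCLike.norm_conj]
              exact entry_bound U y _
          _ = 1 := one_mul 1
    _ = d := by simp

end AvgNonunit

namespace AvgNonunit

section Unitaries
variable {ι : Type*} [Fintype ι] [DecidableEq ι]

def phaseMat (p0 : ι) : Matrix ι ι ℂ := Matrix.diagonal (fun c => if c = p0 then I else 1)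

lemma phaseMat_mem (p0 : ι) : phaseMat p0 ∈ Matrix.unitaryGroup ι ℂ := by
  rw [Matrix.mem_unitaryGroup_iff]
  unfold phaseMat
  rw [Matrix.star_eq_conjTranspose, Matrix.diagonal_conjTranspose, Matrix.diagonal_mul_diagonal]
  ext a b
  by_cases hab : a = b
  · subst hab
    rw [Matrix.diagonal_apply_eq, Matrix.one_apply_eq]
    by_cases ha : a = p0
    · rw [if_pos ha, Pi.star_apply, if_pos ha, Complex.star_def, Complex.conj_I,
        mul_neg, Complex.I_mul_I, neg_neg]
    · rw [if_neg ha, Pi.star_apply, if_neg ha]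
      norm_num
  · rw [Matrix.diagonal_apply_ne _ hab, Matrix.one_apply_ne hab]

lemma phaseMat_mul_apply (p0 : ι) (A : Matrix ι ι ℂ) (x c : ι) :
    (phaseMat p0 * A) x c = (if x = p0 then I else 1) * A x c := by
  unfold phaseMat
  rw [Matrix.diagonal_mul]

def permMat (σ : Equiv.Perm ι) : Matrix ι ι ℂ := Matrix.of fun a b => if a = σ b then 1 else 0

lemma permMat_mem (σ : Equiv.Perm ι) : permMat σ ∈ Matrix.unitaryGroup ι ℂ := by
  rw [Matrix.mem_unitaryGroup_iff]
  ext a b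
  rw [Matrix.mul_apply, Matrix.one_apply]
  have e1 : ∀ c, permMat σ a c * star (permMat σ) c b =
      (fun c' => (if a = c' then (1:ℂ) else 0) * (if b = c' then (1:ℂ) else 0)) (σ c) := by
    intro c
    simp [permMat, Matrix.star_apply, apply_ite (starRingEnd ℂ)]
  rw [Fintype.sum_equiv σ _ (fun c' => (if a = c' then (1:ℂ) else 0) * (if b = c' then (1:ℂ) else 0)) e1]
  simp only [ite_mul, one_mul, zero_mul]
  rw [Finset.sum_ite_eq]
  simp [eq_comm]

lemma permMat_mul_apply (σ : Equiv.Perm ι) (A : Matrix ι ι ℂ) (x c : ι) :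
    (permMat σ * A) x c = A (σ⁻¹ x) c := by
  rw [Matrix.mul_apply]
  have e1 : ∀ p, permMat σ x p * A p c = if σ⁻¹ x = p then A p c else 0 := by
    intro p
    simp only [permMat, Matrix.of_apply]
    by_cases hp : x = σ p
    · have h2 : σ⁻¹ x = p := by simp [hp]
      simp [hp, h2]
    · have h2 : ¬ σ⁻¹ x = p := fun hq => hp (by rw [← hq]; simp)
      simp [hp, h2]
      intro hq
      exact absurd hq h2
  rw [Finset.sum_congr rfl fun p _ => e1 p, Finset.sum_ite_eq]
  simp

def rotR : ℂ := ((Real.sqrt 2)⁻¹ : ℝ)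

lemma rotR_conj : conj rotR = rotR := Complex.conj_ofReal _

lemma star_rotR : star rotR = rotR := rotR_conj

lemma rotR_sq : rotR * rotR = 2⁻¹ := by
  unfold rotR
  rw [← Complex.ofReal_mul]
  have h2 : (Real.sqrt 2)⁻¹ * (Real.sqrt 2)⁻¹ = 2⁻¹ := by
    rw [← mul_inv, Real.mul_self_sqrt (by norm_num : (0:ℝ) ≤ 2)]
  rw [h2]
  norm_num

def rotMat (p q : ι) : Matrix ι ι ℂ := Matrix.of fun a b =>
  if a = p then (if b = p then rotR else if b = q then rotR else 0)
  else if a = q then (if b = p then -rotR else if b = q then rotR else 0)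
  else if a = b then 1 else 0

lemma rowsum2 {p q : ι} (hpq : p ≠ q) (s t : ℂ) (f : ι → ℂ) :
    ∑ c, (if c = p then s else if c = q then t else 0) * f c = s * f p + t * f q := by
  have e1 : ∀ c, (if c = p then s else if c = q then t else 0) * f c =
      (if c = p then s * f p else 0) + (if c = q then t * f q else 0) := by
    intro c
    by_cases h1 : c = p
    · subst h1
      simp [hpq]
    · by_cases h2 : c = q
      · subst h2
        simp [h1, Ne.symm hpq]
      · simp [h1, h2]
  rw [Finset.sum_congr rfl fun c _ => e1 c, Finset.sum_add_distrib,
    Finset.sum_ite_eq', Finset.sum_ite_eq']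
  simp

lemma rowsum1 (a : ι) (f : ι → ℂ) :
    ∑ c, (if a = c then (1:ℂ) else 0) * f c = f a := by
  simp only [ite_mul, one_mul, zero_mul]
  rw [Finset.sum_ite_eq]
  simp

lemma rot_row_p {p q : ι} (c : ι) :
    rotMat p q p c = if c = p then rotR else if c = q then rotR else 0 := by
  simp [rotMat]

lemma rot_row_q {p q : ι} (hpq : p ≠ q) (c : ι) :
    rotMat p q q c = if c = p then -rotR else if c = q then rotR else 0 := by
  simp [rotMat, Ne.symm hpq]

lemma rot_row_other {p q : ι} (a c : ι) (hap : a ≠ p) (haq : a ≠ q) :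
    rotMat p q a c = if a = c then 1 else 0 := by
  simp [rotMat, hap, haq]

lemma rotMat_mem {p q : ι} (hpq : p ≠ q) : rotMat p q ∈ Matrix.unitaryGroup ι ℂ := by
  have hset : ∀ u v : ℂ, u * star v = u * conj v := fun u v => rfl
  rw [Matrix.mem_unitaryGroup_iff]
  ext a b
  rw [Matrix.mul_apply, Matrix.one_apply]
  simp only [Matrix.star_apply]
  by_cases ha : a = p
  · subst ha
    simp only [rot_row_p]
    rw [rowsum2 hpq]
    by_cases hb : a = b
    · subst hb
      rw [rot_row_p, rot_row_p]
      norm_num [Complex.star_def, apply_ite (starRingEnd ℂ), rotR_conj, rotR_sq,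
        hpq, Ne.symm hpq]
    · by_cases hbq : b = q
      · subst hbq
        rw [rot_row_q hpq, rot_row_q hpq]
        norm_num [Complex.star_def, apply_ite (starRingEnd ℂ), map_neg, mul_neg, neg_mul,
          rotR_conj, rotR_sq, hpq, Ne.symm hpq, hb]
      · rw [rot_row_other b a (fun hh => hb hh.symm) hbq,
          rot_row_other b q (fun hh => hb hh.symm) hbq]
        norm_num [Complex.star_def, apply_ite (starRingEnd ℂ),
          hb, hbq, Ne.symm hb]
  · by_cases haq : a = q
    · subst haq
      simp only [rot_row_q hpq]
      rw [rowsum2 hpq]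
      by_cases hb : b = p
      · subst hb
        rw [rot_row_p, rot_row_p]
        norm_num [Complex.star_def, apply_ite (starRingEnd ℂ), map_neg, mul_neg, neg_mul,
          rotR_conj, rotR_sq, hpq, Ne.symm hpq]
      · by_cases hbq : a = b
        · subst hbq
          rw [rot_row_q hpq, rot_row_q hpq]
          norm_num [Complex.star_def, apply_ite (starRingEnd ℂ), map_neg, mul_neg, neg_mul,
            rotR_conj, rotR_sq, hpq, Ne.symm hpq]
        · rw [rot_row_other b p hb (fun hh => hbq hh.symm),
            rot_row_other b a hb (fun hh => hbq hh.symm)]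
          norm_num [Complex.star_def, apply_ite (starRingEnd ℂ),
            hb, hbq, Ne.symm hbq]
    · have hrow : ∀ c, rotMat p q a c = if a = c then 1 else 0 :=
        fun c => rot_row_other a c ha haq
      simp only [hrow]
      rw [rowsum1]
      by_cases hb : b = p
      · subst hb
        rw [rot_row_p]
        norm_num [Complex.star_def, apply_ite (starRingEnd ℂ), ha, haq]
      · by_cases hbq : b = q
        · subst hbq
          rw [rot_row_q hpq]
          norm_num [Complex.star_def, apply_ite (starRingEnd ℂ), ha, haq]
        · rw [rot_row_other b a hb hbq]
          by_cases hab : a = b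
          · subst hab
            simp
          · norm_num [Complex.star_def, apply_ite (starRingEnd ℂ), hab, Ne.symm hab]

lemma rotMat_mul_apply_p {p q : ι} (hpq : p ≠ q) (A : Matrix ι ι ℂ) (c : ι) :
    (rotMat p q * A) p c = rotR * A p c + rotR * A q c := by
  rw [Matrix.mul_apply]
  simp only [rot_row_p]
  rw [rowsum2 hpq]

end Unitaries


section Moments

variable {d M : ℕ} (h : d ≤ d * M)
  (μ : Measure (Matrix.unitaryGroup (Fin d × Fin M) ℂ)) [IsProbabilityMeasure μ]

lemma integrable_PP (x y z w : Fin d × Fin M) :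
    Integrable (fun U => P h U x y * P h U z w) μ := by
  apply (integrable_const ((d : ℝ) * d)).mono'
    (((meas_P h x y).mul (meas_P h z w)).aestronglyMeasurable)
  filter_upwards with U
  rw [Pi.mul_apply, norm_mul]
  exact mul_le_mul (P_bound h U x y) (P_bound h U z w) (norm_nonneg _)
    (Nat.cast_nonneg d)

/-- the second moment of entries of the rotated projection -/
def mmt (x y z w : Fin d × Fin M) : ℂ := ∫ U, P h U x y * P h U z w ∂μ

variable (hμ : ∀ g : Matrix.unitaryGroup (Fin d × Fin M) ℂ, μ.map (fun x => g * x) = μ)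

lemma meas_mul_left (g : Matrix.unitaryGroup (Fin d × Fin M) ℂ) :
    Measurable (fun U : Matrix.unitaryGroup (Fin d × Fin M) ℂ => g * U) := by
  apply Measurable.subtype_mk
  show Measurable fun U : Matrix.unitaryGroup (Fin d × Fin M) ℂ =>
    ((g : Matrix (Fin d × Fin M) (Fin d × Fin M) ℂ) * (U : Matrix (Fin d × Fin M) (Fin d × Fin M) ℂ) : Matrix (Fin d × Fin M) (Fin d × Fin M) ℂ)
  apply measurable_pi_lambda
  intro a
  apply measurable_pi_lambda
  intro b
  simp only [Matrix.mul_apply]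
  apply Finset.measurable_sum
  intro c _
  exact (meas_entry c b).const_mul _

include hμ in
lemma integral_shift (g : Matrix.unitaryGroup (Fin d × Fin M) ℂ)
    (F : Matrix.unitaryGroup (Fin d × Fin M) ℂ → ℂ) (hF : AEStronglyMeasurable F μ) :
    ∫ U, F (g * U) ∂μ = ∫ U, F U ∂μ := by
  conv_rhs => rw [← hμ g]
  rw [integral_map (meas_mul_left g).aemeasurable]
  rw [hμ g]
  exact hF

lemma P_mul_left (g U : Matrix.unitaryGroup (Fin d × Fin M) ℂ) (x y : Fin d × Fin M) :
    P h (g * U) x y = ∑ p : Fin d × Fin M, ∑ q : Fin d × Fin M,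
      (g : Matrix (Fin d × Fin M) (Fin d × Fin M) ℂ) x p *
      conj ((g : Matrix (Fin d × Fin M) (Fin d × Fin M) ℂ) y q) * P h U p q := by
  have expand : ∀ i : Fin d,
      ((g * U : Matrix.unitaryGroup (Fin d × Fin M) ℂ) : Matrix (Fin d × Fin M) (Fin d × Fin M) ℂ) x (emb h i) *
        conj (((g * U : Matrix.unitaryGroup (Fin d × Fin M) ℂ) : Matrix (Fin d × Fin M) (Fin d × Fin M) ℂ) y (emb h i)) =
      ∑ p : Fin d × Fin M, ∑ q : Fin d × Fin M,
        (g : Matrix (Fin d × Fin M) (Fin d × Fin M) ℂ) x p *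
        conj ((g : Matrix (Fin d × Fin M) (Fin d × Fin M) ℂ) y q) *
        ((U : Matrix (Fin d × Fin M) (Fin d × Fin M) ℂ) p (emb h i) *
          conj ((U : Matrix (Fin d × Fin M) (Fin d × Fin M) ℂ) q (emb h i))) := by
    intro i
    simp only [Matrix.UnitaryGroup.mul_val, Matrix.mul_apply]
    rw [map_sum, Finset.sum_mul_sum]
    exact Finset.sum_congr rfl fun p _ => Finset.sum_congr rfl fun q _ => by
      rw [_root_.map_mul]; ring
  unfold P
  simp only [expand]
  rw [Finset.sum_comm]
  refine Finset.sum_congr rfl fun p _ => ?_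
  rw [Finset.sum_comm]
  refine Finset.sum_congr rfl fun q _ => ?_
  rw [Finset.mul_sum]

lemma mmt_comm (x y z w : Fin d × Fin M) :
    mmt h μ x y z w = mmt h μ z w x y := by
  unfold mmt
  congr 1
  funext U
  ring

lemma P_phase (p0 : Fin d × Fin M) (U : Matrix.unitaryGroup (Fin d × Fin M) ℂ)
    (x y : Fin d × Fin M) :
    P h ((⟨phaseMat p0, phaseMat_mem p0⟩ : Matrix.unitaryGroup (Fin d × Fin M) ℂ) * U) x y =
      (if x = p0 then I else 1) * conj (if y = p0 then I else 1) * P h U x y := by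
  unfold P
  rw [Finset.mul_sum]
  refine Finset.sum_congr rfl fun i _ => ?_
  have hx : ∀ u v : Fin d × Fin M,
      ((⟨phaseMat p0, phaseMat_mem p0⟩ : Matrix.unitaryGroup (Fin d × Fin M) ℂ) * U :
        Matrix.unitaryGroup (Fin d × Fin M) ℂ).1 u v =
      (if u = p0 then I else 1) * U.1 u v := by
    intro u v
    show (phaseMat p0 * U.1) u v = _
    rw [phaseMat_mul_apply]
  rw [hx, hx, _root_.map_mul]
  ring

include hμ in
lemma mmt_eq_phase_mul (p0 x y z w : Fin d × Fin M) :
    mmt h μ x y z w = ((if x = p0 then I else 1) * conj (if y = p0 then I else 1) *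
      ((if z = p0 then I else 1) * conj (if w = p0 then I else 1))) * mmt h μ x y z w := by
  conv_lhs => rw [mmt, ← integral_shift μ hμ (⟨phaseMat p0, phaseMat_mem p0⟩ :
    Matrix.unitaryGroup (Fin d × Fin M) ℂ) _ (integrable_PP h μ x y z w).aestronglyMeasurable]
  have : ∀ U, P h ((⟨phaseMat p0, phaseMat_mem p0⟩ :
        Matrix.unitaryGroup (Fin d × Fin M) ℂ) * U) x y *
      P h ((⟨phaseMat p0, phaseMat_mem p0⟩ : Matrix.unitaryGroup (Fin d × Fin M) ℂ) * U) z w =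
      ((if x = p0 then I else 1) * conj (if y = p0 then I else 1) *
        ((if z = p0 then I else 1) * conj (if w = p0 then I else 1))) *
      (P h U x y * P h U z w) := by
    intro U
    rw [P_phase, P_phase]
    ring
  rw [integral_congr_ae (Filter.Eventually.of_forall this), integral_const_mul]
  rfl

lemma cancel_of_ne_one {c m : ℂ} (hc : c ≠ 1) (hm : m = c * m) : m = 0 := by
  have h0 : (1 - c) * m = 0 := by linear_combination hm
  rcases mul_eq_zero.mp h0 with h | h
  · exact absurd (by linear_combination -h) hc
  · exact h

lemma I_ne_one' : (I : ℂ) ≠ 1 := by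
  intro hh
  have := congrArg Complex.im hh
  simp at this

lemma neg_I_ne_one : (-I : ℂ) ≠ 1 := by
  intro hh
  have := congrArg Complex.im hh
  simp at this

lemma neg_one_ne_one : (-1 : ℂ) ≠ 1 := by
  intro hh
  have := congrArg Complex.re hh
  norm_num at this

include hμ in
lemma mmt_vanish₁ {x y z w : Fin d × Fin M} (hy : y ≠ x) (hz : z ≠ x) (hw : w ≠ x) :
    mmt h μ x y z w = 0 := by
  have hm := mmt_eq_phase_mul h μ hμ x x y z w
  rw [if_pos rfl, if_neg hy, if_neg hz, if_neg hw] at hm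
  simp only [_root_.map_one, mul_one, one_mul] at hm
  exact cancel_of_ne_one I_ne_one' hm

include hμ in
lemma mmt_vanish₂ {x y z w : Fin d × Fin M} (hx : x ≠ w) (hy : y ≠ w) (hz : z ≠ w) :
    mmt h μ x y z w = 0 := by
  have hm := mmt_eq_phase_mul h μ hμ w x y z w
  rw [if_pos rfl, if_neg hx, if_neg hy, if_neg hz] at hm
  rw [Complex.conj_I] at hm
  simp only [_root_.map_one, mul_one, one_mul] at hm
  exact cancel_of_ne_one (neg_I_ne_one) hm

include hμ in
lemma mmt_vanish₃ {x y z w : Fin d × Fin M} (hx : x ≠ z) (hy : y ≠ z) (hw : w ≠ z) :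
    mmt h μ x y z w = 0 := by
  have hm := mmt_eq_phase_mul h μ hμ z x y z w
  rw [if_pos rfl, if_neg hx, if_neg hy, if_neg hw] at hm
  simp only [_root_.map_one, mul_one, one_mul] at hm
  exact cancel_of_ne_one I_ne_one' hm

include hμ in
lemma mmt_vanish₄ {x y z w : Fin d × Fin M} (hx : x ≠ y) (hz : z ≠ y) (hw : w ≠ y) :
    mmt h μ x y z w = 0 := by
  have hm := mmt_eq_phase_mul h μ hμ y x y z w
  rw [if_pos rfl, if_neg hx, if_neg hz, if_neg hw] at hm
  rw [Complex.conj_I] at hm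
  simp only [_root_.map_one, mul_one, one_mul] at hm
  exact cancel_of_ne_one (neg_I_ne_one) hm

include hμ in
lemma mmt_vanish₅ {x y w : Fin d × Fin M} (hy : y ≠ x) (hw : w ≠ x) :
    mmt h μ x y x w = 0 := by
  have hm := mmt_eq_phase_mul h μ hμ x x y x w
  rw [if_pos rfl, if_neg hy, if_neg hw] at hm
  simp only [_root_.map_one, mul_one, one_mul] at hm
  rw [Complex.I_mul_I] at hm
  exact cancel_of_ne_one (neg_one_ne_one) hm

include hμ in
lemma mmt_vanish₆ {x z y : Fin d × Fin M} (hx : x ≠ y) (hz : z ≠ y) :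
    mmt h μ x y z y = 0 := by
  have hm := mmt_eq_phase_mul h μ hμ y x y z y
  rw [if_pos rfl, if_neg hx, if_neg hz, Complex.conj_I] at hm
  simp only [one_mul, mul_one] at hm
  rw [show (-I : ℂ) * -I = -1 by rw [neg_mul_neg, Complex.I_mul_I]] at hm
  exact cancel_of_ne_one (neg_one_ne_one) hm

lemma P_perm (σ : Equiv.Perm (Fin d × Fin M)) (U : Matrix.unitaryGroup (Fin d × Fin M) ℂ)
    (x y : Fin d × Fin M) :
    P h ((⟨permMat σ, permMat_mem σ⟩ : Matrix.unitaryGroup (Fin d × Fin M) ℂ) * U) x y =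
      P h U (σ⁻¹ x) (σ⁻¹ y) := by
  unfold P
  refine Finset.sum_congr rfl fun i _ => ?_
  have hx : ∀ u v : Fin d × Fin M,
      ((⟨permMat σ, permMat_mem σ⟩ : Matrix.unitaryGroup (Fin d × Fin M) ℂ) * U :
        Matrix.unitaryGroup (Fin d × Fin M) ℂ).1 u v = U.1 (σ⁻¹ u) v := by
    intro u v
    show (permMat σ * U.1) u v = _
    rw [permMat_mul_apply]
  rw [hx, hx]

include hμ in
lemma mmt_perm (σ : Equiv.Perm (Fin d × Fin M)) (x y z w : Fin d × Fin M) :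
    mmt h μ (σ x) (σ y) (σ z) (σ w) = mmt h μ x y z w := by
  have key : mmt h μ (σ x) (σ y) (σ z) (σ w) =
      mmt h μ (σ⁻¹ (σ x)) (σ⁻¹ (σ y)) (σ⁻¹ (σ z)) (σ⁻¹ (σ w)) := by
    conv_lhs => rw [mmt, ← integral_shift μ hμ (⟨permMat σ, permMat_mem σ⟩ :
      Matrix.unitaryGroup (Fin d × Fin M) ℂ) _
      (integrable_PP h μ (σ x) (σ y) (σ z) (σ w)).aestronglyMeasurable]
    have hpt : ∀ U, P h ((⟨permMat σ, permMat_mem σ⟩ :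
          Matrix.unitaryGroup (Fin d × Fin M) ℂ) * U) (σ x) (σ y) *
        P h ((⟨permMat σ, permMat_mem σ⟩ : Matrix.unitaryGroup (Fin d × Fin M) ℂ) * U) (σ z) (σ w)
        = P h U (σ⁻¹ (σ x)) (σ⁻¹ (σ y)) * P h U (σ⁻¹ (σ z)) (σ⁻¹ (σ w)) := by
      intro U
      rw [P_perm, P_perm]
    rw [integral_congr_ae (Filter.Eventually.of_forall hpt)]
    rfl
  simpa using key

lemma P_rot {p q : Fin d × Fin M} (hpq : p ≠ q) (U : Matrix.unitaryGroup (Fin d × Fin M) ℂ) :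
    P h ((⟨rotMat p q, rotMat_mem hpq⟩ : Matrix.unitaryGroup (Fin d × Fin M) ℂ) * U) p p =
      2⁻¹ * (P h U p p + P h U p q + P h U q p + P h U q q) := by
  unfold P
  have hx : ∀ v : Fin d × Fin M,
      ((⟨rotMat p q, rotMat_mem hpq⟩ : Matrix.unitaryGroup (Fin d × Fin M) ℂ) * U :
        Matrix.unitaryGroup (Fin d × Fin M) ℂ).1 p v = rotR * U.1 p v + rotR * U.1 q v := by
    intro v
    show (rotMat p q * U.1) p v = _
    rw [rotMat_mul_apply_p hpq]
  conv_rhs => rw [← Finset.sum_add_distrib, ← Finset.sum_add_distrib, ← Finset.sum_add_distrib,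
    Finset.mul_sum]
  refine Finset.sum_congr rfl fun i _ => ?_
  rw [hx, map_add, _root_.map_mul, _root_.map_mul, rotR_conj]
  have hsq := rotR_sq
  linear_combination (U.1 p (emb h i) * conj (U.1 p (emb h i)) +
    U.1 p (emb h i) * conj (U.1 q (emb h i)) + U.1 q (emb h i) * conj (U.1 p (emb h i)) +
    U.1 q (emb h i) * conj (U.1 q (emb h i))) * hsq

include hμ in
lemma mmt_rot {p q : Fin d × Fin M} (hpq : p ≠ q) :
    mmt h μ p p p p = mmt h μ p p q q + mmt h μ p q q p := by
  classical
  have h0 := integral_shift μ hμ (⟨rotMat p q, rotMat_mem hpq⟩ :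
      Matrix.unitaryGroup (Fin d × Fin M) ℂ) (fun U => P h U p p * P h U p p)
    (integrable_PP h μ p p p p).aestronglyMeasurable
  have hpt : ∀ U, P h ((⟨rotMat p q, rotMat_mem hpq⟩ :
        Matrix.unitaryGroup (Fin d × Fin M) ℂ) * U) p p *
      P h ((⟨rotMat p q, rotMat_mem hpq⟩ : Matrix.unitaryGroup (Fin d × Fin M) ℂ) * U) p p =
      4⁻¹ * ∑ s : Fin 2, ∑ t : Fin 2, ∑ s' : Fin 2, ∑ t' : Fin 2,
        P h U (![p,q] s) (![p,q] t) * P h U (![p,q] s') (![p,q] t') := by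
    intro U
    rw [P_rot h hpq U]
    simp only [Fin.sum_univ_two, Matrix.cons_val_zero, Matrix.cons_val_one, Matrix.head_cons]
    ring
  have h1 : ∫ U, P h ((⟨rotMat p q, rotMat_mem hpq⟩ :
        Matrix.unitaryGroup (Fin d × Fin M) ℂ) * U) p p *
      P h ((⟨rotMat p q, rotMat_mem hpq⟩ : Matrix.unitaryGroup (Fin d × Fin M) ℂ) * U) p p ∂μ =
      4⁻¹ * ∑ s : Fin 2, ∑ t : Fin 2, ∑ s' : Fin 2, ∑ t' : Fin 2,
        mmt h μ (![p,q] s) (![p,q] t) (![p,q] s') (![p,q] t') := by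
    rw [integral_congr_ae (Filter.Eventually.of_forall hpt), integral_const_mul]
    congr 1
    rw [integral_finset_sum _ (fun s _ => integrable_finset_sum _ (fun t _ =>
      integrable_finset_sum _ (fun s' _ => integrable_finset_sum _ (fun t' _ =>
        integrable_PP h μ _ _ _ _))))]
    refine Finset.sum_congr rfl fun s _ => ?_
    rw [integral_finset_sum _ (fun t _ => integrable_finset_sum _ (fun s' _ =>
      integrable_finset_sum _ (fun t' _ => integrable_PP h μ _ _ _ _)))]
    refine Finset.sum_congr rfl fun t _ => ?_
    rw [integral_finset_sum _ (fun s' _ => integrable_finset_sum _ (fun t' _ =>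
      integrable_PP h μ _ _ _ _))]
    refine Finset.sum_congr rfl fun s' _ => ?_
    rw [integral_finset_sum _ (fun t' _ => integrable_PP h μ _ _ _ _)]
    rfl
  have key : mmt h μ p p p p = 4⁻¹ * ∑ s : Fin 2, ∑ t : Fin 2, ∑ s' : Fin 2, ∑ t' : Fin 2,
      mmt h μ (![p,q] s) (![p,q] t) (![p,q] s') (![p,q] t') := by
    rw [← h1, h0]
    rfl
  simp only [Fin.sum_univ_two, Matrix.cons_val_zero, Matrix.cons_val_one, Matrix.head_cons] at key
  have hqp : q ≠ p := Ne.symm hpq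
  rw [mmt_vanish₂ h μ hμ hpq hpq hpq, mmt_vanish₃ h μ hμ hpq hpq hpq,
    mmt_vanish₄ h μ hμ hpq hpq hpq, mmt_vanish₅ h μ hμ hqp hqp,
    mmt_vanish₁ h μ hμ hqp hqp hqp, mmt_vanish₁ h μ hμ hpq hpq hpq,
    mmt_vanish₆ h μ hμ hqp hqp, mmt_vanish₄ h μ hμ hqp hqp hqp,
    mmt_vanish₃ h μ hμ hqp hqp hqp, mmt_vanish₂ h μ hμ hqp hqp hqp] at key
  have hswap := mmt_perm h μ hμ (Equiv.swap p q) p p p p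
  rw [Equiv.swap_apply_left] at hswap
  rw [hswap] at key
  rw [mmt_comm h μ q q p p, mmt_comm h μ q p p q] at key
  linear_combination 2 * key

lemma traceP (U : Matrix.unitaryGroup (Fin d × Fin M) ℂ) :
    ∑ x : Fin d × Fin M, P h U x x = (d : ℂ) := by
  unfold P
  rw [Finset.sum_comm]
  have hcol : ∀ i : Fin d, ∑ x : Fin d × Fin M,
      U.1 x (emb h i) * conj (U.1 x (emb h i)) = 1 := by
    intro i
    have h1 : (star U.1 * U.1) (emb h i) (emb h i) = 1 := by rw [U.2.1]; simp
    rw [Matrix.mul_apply] at h1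
    rw [← h1]
    refine Finset.sum_congr rfl fun x _ => ?_
    rw [Matrix.star_apply]
    exact mul_comm _ _
  rw [Finset.sum_congr rfl fun i _ => hcol i]
  simp

lemma P_proj (U : Matrix.unitaryGroup (Fin d × Fin M) ℂ) (x z : Fin d × Fin M) :
    ∑ y : Fin d × Fin M, P h U x y * P h U y z = P h U x z := by
  have horth : ∀ i j : Fin d, ∑ y : Fin d × Fin M,
      conj (U.1 y (emb h i)) * U.1 y (emb h j) = if i = j then 1 else 0 := by
    intro i j
    have h1 : (star U.1 * U.1) (emb h i) (emb h j) = if i = j then (1:ℂ) else 0 := by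
      rw [U.2.1]
      by_cases hij : i = j
      · subst hij; simp
      · rw [Matrix.one_apply_ne (fun hc => hij (emb_inj h hc))]
        simp [hij]
    rw [Matrix.mul_apply] at h1
    rw [← h1]
    exact Finset.sum_congr rfl fun y _ => by rw [Matrix.star_apply]; rfl
  unfold P
  have step1 : ∀ y : Fin d × Fin M,
      (∑ i, U.1 x (emb h i) * conj (U.1 y (emb h i))) *
      (∑ j, U.1 y (emb h j) * conj (U.1 z (emb h j))) =
      ∑ i, ∑ j, (U.1 x (emb h i) * conj (U.1 z (emb h j))) *
        (conj (U.1 y (emb h i)) * U.1 y (emb h j)) := by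
    intro y
    rw [Finset.sum_mul_sum]
    exact Finset.sum_congr rfl fun i _ => Finset.sum_congr rfl fun j _ => by ring
  rw [Finset.sum_congr rfl fun y _ => step1 y]
  rw [Finset.sum_comm]
  have step2 : ∀ i, ∑ y : Fin d × Fin M, ∑ j,
      (U.1 x (emb h i) * conj (U.1 z (emb h j))) *
        (conj (U.1 y (emb h i)) * U.1 y (emb h j)) =
      ∑ j, (U.1 x (emb h i) * conj (U.1 z (emb h j))) *
        ∑ y : Fin d × Fin M, conj (U.1 y (emb h i)) * U.1 y (emb h j) := by
    intro i
    rw [Finset.sum_comm]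
    exact Finset.sum_congr rfl fun j _ => (Finset.mul_sum _ _ _).symm
  rw [Finset.sum_congr rfl fun i _ => step2 i]
  refine Finset.sum_congr rfl fun i _ => ?_
  rw [Finset.sum_congr rfl fun j _ => by rw [horth i j]]
  simp only [mul_ite, mul_one, mul_zero]
  rw [Finset.sum_ite_eq]
  simp

lemma eqE1 : ∑ x : Fin d × Fin M, ∑ z : Fin d × Fin M, mmt h μ x x z z = (d:ℂ)^2 := by
  have hpt : ∀ U, ∑ x : Fin d × Fin M, ∑ z : Fin d × Fin M,
      P h U x x * P h U z z = (d:ℂ)^2 := by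
    intro U
    rw [← Finset.sum_mul_sum, traceP h U]
    ring
  have hsum : ∑ x : Fin d × Fin M, ∑ z : Fin d × Fin M, mmt h μ x x z z =
      ∫ U, ∑ x : Fin d × Fin M, ∑ z : Fin d × Fin M, P h U x x * P h U z z ∂μ := by
    rw [integral_finset_sum _ (fun x _ => integrable_finset_sum _
      (fun z _ => integrable_PP h μ _ _ _ _))]
    refine Finset.sum_congr rfl fun x _ => ?_
    rw [integral_finset_sum _ (fun z _ => integrable_PP h μ _ _ _ _)]
    rfl
  rw [hsum, integral_congr_ae (Filter.Eventually.of_forall hpt), integral_const]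
  simp

lemma eqE2 : ∑ x : Fin d × Fin M, ∑ y : Fin d × Fin M, mmt h μ x y y x = (d:ℂ) := by
  have hpt : ∀ U, ∑ x : Fin d × Fin M, ∑ y : Fin d × Fin M,
      P h U x y * P h U y x = (d:ℂ) := by
    intro U
    rw [Finset.sum_congr rfl fun x _ => P_proj h U x x]
    exact traceP h U
  have hsum : ∑ x : Fin d × Fin M, ∑ y : Fin d × Fin M, mmt h μ x y y x =
      ∫ U, ∑ x : Fin d × Fin M, ∑ y : Fin d × Fin M, P h U x y * P h U y x ∂μ := by
    rw [integral_finset_sum _ (fun x _ => integrable_finset_sum _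
      (fun y _ => integrable_PP h μ _ _ _ _))]
    refine Finset.sum_congr rfl fun x _ => ?_
    rw [integral_finset_sum _ (fun y _ => integrable_PP h μ _ _ _ _)]
    rfl
  rw [hsum, integral_congr_ae (Filter.Eventually.of_forall hpt), integral_const]
  simp

lemma exists_perm_pair {α : Type*} [DecidableEq α] {x z x' z' : α}
    (hxz : x ≠ z) (hxz' : x' ≠ z') :
    ∃ σ : Equiv.Perm α, σ x = x' ∧ σ z = z' := by
  classical
  have hz1 : Equiv.swap x x' z ≠ x' := by
    by_cases hzx' : z = x'
    · subst hzx'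
      rw [Equiv.swap_apply_right]
      exact hxz
    · by_cases hzx : z = x
      · exact absurd hzx (Ne.symm hxz)
      · rw [Equiv.swap_apply_of_ne_of_ne hzx hzx']
        exact hzx'
  refine ⟨Equiv.swap (Equiv.swap x x' z) z' * Equiv.swap x x', ?_, ?_⟩
  · show Equiv.swap (Equiv.swap x x' z) z' (Equiv.swap x x' x) = x'
    rw [Equiv.swap_apply_left]
    exact Equiv.swap_apply_of_ne_of_ne (Ne.symm hz1) hxz'
  · show Equiv.swap (Equiv.swap x x' z) z' (Equiv.swap x x' z) = z'
    exact Equiv.swap_apply_left _ _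

include hμ in
lemma mmt_diag_const (x p0 : Fin d × Fin M) :
    mmt h μ x x x x = mmt h μ p0 p0 p0 p0 := by
  have hh := mmt_perm h μ hμ (Equiv.swap x p0) p0 p0 p0 p0
  rw [Equiv.swap_apply_right] at hh
  exact hh

include hμ in
lemma mmt_c1_const {x z p0 q0 : Fin d × Fin M} (hxz : x ≠ z) (hpq0 : p0 ≠ q0) :
    mmt h μ x x z z = mmt h μ p0 p0 q0 q0 := by
  obtain ⟨σ, h1, h2⟩ := exists_perm_pair hpq0 hxz
  have hh := mmt_perm h μ hμ σ p0 p0 q0 q0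
  rw [h1, h2] at hh
  exact hh

include hμ in
lemma mmt_c2_const {x y p0 q0 : Fin d × Fin M} (hxy : x ≠ y) (hpq0 : p0 ≠ q0) :
    mmt h μ x y y x = mmt h μ p0 q0 q0 p0 := by
  obtain ⟨σ, h1, h2⟩ := exists_perm_pair hpq0 hxy
  have hh := mmt_perm h μ hμ σ p0 q0 q0 p0
  rw [h1, h2] at hh
  exact hh

lemma sum_ite_pair {κ : Type*} [Fintype κ] [DecidableEq κ] (u v : ℂ) :
    ∑ x : κ, ∑ z : κ, (if x = z then u else v) =
      (Fintype.card κ : ℂ) * u + (Fintype.card κ : ℂ) * ((Fintype.card κ : ℂ) - 1) * v := by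
  have hinner : ∀ x : κ, ∑ z : κ, (if x = z then u else v) =
      u + ((Fintype.card κ : ℂ) - 1) * v := by
    intro x
    have hterm : ∀ z, (if x = z then u else v) = v + (if x = z then u - v else 0) := by
      intro z; split <;> ring
    rw [Finset.sum_congr rfl fun z _ => hterm z, Finset.sum_add_distrib, Finset.sum_const,
      Finset.sum_ite_eq]
    simp [Finset.card_univ]
    ring
  rw [Finset.sum_congr rfl fun x _ => hinner x, Finset.sum_const]
  simp [Finset.card_univ]
  ring

lemma channel_apply (U : Matrix.unitaryGroup (Fin d × Fin M) ℂ) (a b : Fin d) :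
    stinespringChannel d d M h U ((d:ℂ)⁻¹ • 1) a b =
      (d:ℂ)⁻¹ * ∑ k : Fin M, P h U (a,k) (b,k) := by
  simp only [stinespringChannel, ptrEnv, Matrix.of_apply]
  rw [Finset.mul_sum]
  refine Finset.sum_congr rfl fun k _ => ?_
  rw [Matrix.mul_apply]
  unfold P
  rw [Finset.mul_sum]
  refine Finset.sum_congr rfl fun i _ => ?_
  rw [Matrix.conjTranspose_apply]
  have hV : (stinespringIsometry d d M h U * ((d:ℂ)⁻¹ • (1 : Matrix (Fin d) (Fin d) ℂ))) (a,k) i =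
      (d:ℂ)⁻¹ * stinespringIsometry d d M h U (a,k) i := by
    rw [Matrix.mul_smul, Matrix.mul_one, Matrix.smul_apply, smul_eq_mul]
  rw [hV, show stinespringIsometry d d M h U (a,k) i = U.1 (a,k) (emb h i) from rfl,
    show stinespringIsometry d d M h U (b,k) i = U.1 (b,k) (emb h i) from rfl,
    show star (U.1 (b,k) (emb h i)) = conj (U.1 (b,k) (emb h i)) from rfl]
  ring

end Moments

end AvgNonunit

open AvgNonunit in
/-- The expected squared Hilbert–Schmidt distance between `Φ_U(𝟙/d)` and `𝟙/d` equals
`(d² − 1)(M − 1)/(d(d²M² − 1))`; in particular, for `M = t d²` it equals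
`(d² − 1)(td² − 1)/(d(t²d⁶ − 1))`. -/
theorem average_nonunitality (d M : ℕ) (hd : 0 < d) (hM : 0 < M)
    (h2 : 2 ≤ d * M) (h : d ≤ d * M)
    (μ : Measure (Matrix.unitaryGroup (Fin d × Fin M) ℂ)) [IsProbabilityMeasure μ]
    (hμ : ∀ g : Matrix.unitaryGroup (Fin d × Fin M) ℂ, μ.map (fun x => g * x) = μ) :
    (∫ U, ((stinespringChannel d d M h U ((d : ℂ)⁻¹ • 1) - (d : ℂ)⁻¹ • 1) *
          (stinespringChannel d d M h U ((d : ℂ)⁻¹ • 1) - (d : ℂ)⁻¹ • 1)).trace ∂μ =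
        ((d : ℂ) ^ 2 - 1) * ((M : ℂ) - 1) /
          ((d : ℂ) * ((d : ℂ) ^ 2 * (M : ℂ) ^ 2 - 1))) ∧
    (∀ t : ℕ, 0 < t → M = t * d ^ 2 →
      ∫ U, ((stinespringChannel d d M h U ((d : ℂ)⁻¹ • 1) - (d : ℂ)⁻¹ • 1) *
          (stinespringChannel d d M h U ((d : ℂ)⁻¹ • 1) - (d : ℂ)⁻¹ • 1)).trace ∂μ =
        ((d : ℂ) ^ 2 - 1) * ((t : ℂ) * (d : ℂ) ^ 2 - 1) /
          ((d : ℂ) * ((t : ℂ) ^ 2 * (d : ℂ) ^ 6 - 1))) := by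
  classical
  have hd0 : (d:ℂ) ≠ 0 := Nat.cast_ne_zero.mpr hd.ne'
  set c : ℂ := (d:ℂ)⁻¹ with hc
  have hTrQ : ∀ U : Matrix.unitaryGroup (Fin d × Fin M) ℂ,
      ∑ a : Fin d, ∑ k : Fin M, P h U (a,k) (a,k) = (d:ℂ) := by
    intro U
    have hh := traceP h U
    rwa [Fintype.sum_prod_type] at hh
  have htrPhi : ∀ U, (stinespringChannel d d M h U ((d:ℂ)⁻¹ • 1)).trace = c * (d:ℂ) := by
    intro U
    rw [Matrix.trace]
    have hdiag : ∀ a : Fin d, (stinespringChannel d d M h U ((d:ℂ)⁻¹ • 1)).diag a =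
        c * ∑ k : Fin M, P h U (a,k) (a,k) := fun a => channel_apply h U a a
    rw [Finset.sum_congr rfl fun a _ => hdiag a, ← Finset.mul_sum, hTrQ U]
  have integrand_eq : ∀ U,
      ((stinespringChannel d d M h U ((d : ℂ)⁻¹ • 1) - (d : ℂ)⁻¹ • 1) *
        (stinespringChannel d d M h U ((d : ℂ)⁻¹ • 1) - (d : ℂ)⁻¹ • 1)).trace =
      c^2 * (∑ a : Fin d, ∑ b : Fin d, ∑ k : Fin M, ∑ k' : Fin M,
        P h U (a,k) (b,k) * P h U (b,k') (a,k')) - c := by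
    intro U
    set Φ := stinespringChannel d d M h U ((d : ℂ)⁻¹ • 1) with hΦ
    have htr : ((Φ - c • 1) * (Φ - c • 1)).trace =
        (Φ * Φ).trace - c * Φ.trace - c * Φ.trace + c * c * (d:ℂ) := by
      rw [sub_mul, mul_sub, mul_sub, Matrix.trace_sub, Matrix.trace_sub]
      simp only [Matrix.mul_smul, Matrix.mul_one, Matrix.smul_mul, Matrix.one_mul,
        Matrix.trace_sub, Matrix.trace_smul, Matrix.trace_one, smul_eq_mul, smul_smul,
        Fintype.card_fin]
      ring
    have htrPP : (Φ * Φ).trace = c^2 * (∑ a : Fin d, ∑ b : Fin d, ∑ k : Fin M, ∑ k' : Fin M,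
        P h U (a,k) (b,k) * P h U (b,k') (a,k')) := by
      have e1 : (Φ * Φ).trace = ∑ a : Fin d, ∑ b : Fin d, Φ a b * Φ b a := by
        rw [Matrix.trace]
        exact Finset.sum_congr rfl fun a _ => Matrix.mul_apply
      rw [e1]
      have e2 : ∀ a b : Fin d, Φ a b * Φ b a =
          c^2 * ∑ k : Fin M, ∑ k' : Fin M, P h U (a,k) (b,k) * P h U (b,k') (a,k') := by
        intro a b
        rw [hΦ, channel_apply h U a b, channel_apply h U b a,
          show ((d:ℂ)⁻¹ * ∑ k : Fin M, P h U (a,k) (b,k)) *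
              ((d:ℂ)⁻¹ * ∑ k' : Fin M, P h U (b,k') (a,k')) =
            c^2 * ((∑ k : Fin M, P h U (a,k) (b,k)) * (∑ k' : Fin M, P h U (b,k') (a,k')))
            from by rw [hc]; ring,
          Finset.sum_mul_sum]
      rw [Finset.sum_congr rfl fun a _ => Finset.sum_congr rfl fun b _ => e2 a b]
      rw [Finset.sum_congr rfl fun a _ => (Finset.mul_sum _ _ _).symm]
      exact (Finset.mul_sum _ _ _).symm
    rw [htr, htrPP, htrPhi U]
    have hcd : c * (c * (d:ℂ)) = c := by
      rw [hc]
      field_simp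
    linear_combination -hcd
  have hint : ∫ U, ((stinespringChannel d d M h U ((d : ℂ)⁻¹ • 1) - (d : ℂ)⁻¹ • 1) *
        (stinespringChannel d d M h U ((d : ℂ)⁻¹ • 1) - (d : ℂ)⁻¹ • 1)).trace ∂μ =
      c^2 * (∑ a : Fin d, ∑ b : Fin d, ∑ k : Fin M, ∑ k' : Fin M,
        mmt h μ (a,k) (b,k) (b,k') (a,k')) - c := by
    rw [integral_congr_ae (Filter.Eventually.of_forall integrand_eq)]
    have intF : Integrable (fun U => ∑ a : Fin d, ∑ b : Fin d, ∑ k : Fin M, ∑ k' : Fin M,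
        P h U (a,k) (b,k) * P h U (b,k') (a,k')) μ :=
      integrable_finset_sum _ (fun a _ => integrable_finset_sum _ (fun b _ =>
        integrable_finset_sum _ (fun k _ => integrable_finset_sum _ (fun k' _ =>
          integrable_PP h μ _ _ _ _))))
    rw [integral_sub (intF.const_mul _) (integrable_const c), integral_const, integral_const_mul]
    have hF : ∫ U, (∑ a : Fin d, ∑ b : Fin d, ∑ k : Fin M, ∑ k' : Fin M,
        P h U (a,k) (b,k) * P h U (b,k') (a,k')) ∂μ =
        ∑ a : Fin d, ∑ b : Fin d, ∑ k : Fin M, ∑ k' : Fin M,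
          mmt h μ (a,k) (b,k) (b,k') (a,k') := by
      rw [integral_finset_sum _ (fun a _ => integrable_finset_sum _ (fun b _ =>
        integrable_finset_sum _ (fun k _ => integrable_finset_sum _ (fun k' _ =>
          integrable_PP h μ _ _ _ _))))]
      refine Finset.sum_congr rfl fun a _ => ?_
      rw [integral_finset_sum _ (fun b _ => integrable_finset_sum _ (fun k _ =>
        integrable_finset_sum _ (fun k' _ => integrable_PP h μ _ _ _ _)))]
      refine Finset.sum_congr rfl fun b _ => ?_
      rw [integral_finset_sum _ (fun k _ => integrable_finset_sum _ (fun k' _ =>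
        integrable_PP h μ _ _ _ _))]
      refine Finset.sum_congr rfl fun k _ => ?_
      rw [integral_finset_sum _ (fun k' _ => integrable_PP h μ _ _ _ _)]
      rfl
    rw [hF]
    simp
  have h1lt : 1 < d * M := h2
  have h0lt : 0 < d * M := lt_trans one_pos h1lt
  set p0 : Fin d × Fin M := finProdFinEquiv.symm (⟨0, h0lt⟩ : Fin (d * M)) with hp0
  set q0 : Fin d × Fin M := finProdFinEquiv.symm (⟨1, h1lt⟩ : Fin (d * M)) with hq0
  have hpq0 : p0 ≠ q0 := by
    intro hh
    have := finProdFinEquiv.symm.injective hh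
    simp [Fin.ext_iff] at this
  set c0 : ℂ := mmt h μ p0 p0 p0 p0 with hc0d
  set c1 : ℂ := mmt h μ p0 p0 q0 q0 with hc1d
  set c2 : ℂ := mmt h μ p0 q0 q0 p0 with hc2d
  set N : ℂ := ((d : ℂ) * (M : ℂ)) with hN
  have hcard : (Fintype.card (Fin d × Fin M) : ℂ) = N := by
    rw [hN]
    simp [Fintype.card_prod]
  have hmm1 : ∀ x z : Fin d × Fin M, mmt h μ x x z z = if x = z then c0 else c1 := by
    intro x z
    by_cases hxz : x = z
    · subst hxz; rw [if_pos rfl]; exact mmt_diag_const h μ hμ x p0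
    · rw [if_neg hxz]; exact mmt_c1_const h μ hμ hxz hpq0
  have hmm2 : ∀ x y : Fin d × Fin M, mmt h μ x y y x = if x = y then c0 else c2 := by
    intro x y
    by_cases hxy : x = y
    · subst hxy; rw [if_pos rfl]; exact mmt_diag_const h μ hμ x p0
    · rw [if_neg hxy]; exact mmt_c2_const h μ hμ hxy hpq0
  have E1 : N * c0 + N * (N - 1) * c1 = (d:ℂ)^2 := by
    have hh := eqE1 h μ
    rw [Finset.sum_congr rfl (fun x _ => Finset.sum_congr rfl (fun z _ => hmm1 x z)),
      sum_ite_pair, hcard] at hh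
    linear_combination hh
  have E2 : N * c0 + N * (N - 1) * c2 = (d:ℂ) := by
    have hh := eqE2 h μ
    rw [Finset.sum_congr rfl (fun x _ => Finset.sum_congr rfl (fun y _ => hmm2 x y)),
      sum_ite_pair, hcard] at hh
    linear_combination hh
  have E3 : c0 = c1 + c2 := mmt_rot h μ hμ hpq0
  have hterm : ∀ (a b : Fin d) (k k' : Fin M), mmt h μ (a,k) (b,k) (b,k') (a,k') =
      if a = b then (if k = k' then c0 else c1) else (if k = k' then c2 else 0) := by
    intro a b k k'
    by_cases hab : a = b
    · subst hab
      by_cases hkk : k = k'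
      · subst hkk; rw [if_pos rfl, if_pos rfl]; exact mmt_diag_const h μ hμ _ p0
      · rw [if_pos rfl, if_neg hkk]
        exact mmt_c1_const h μ hμ (fun hh => hkk (Prod.ext_iff.mp hh).2) hpq0
    · by_cases hkk : k = k'
      · subst hkk; rw [if_neg hab, if_pos rfl]
        exact mmt_c2_const h μ hμ (fun hh => hab (Prod.ext_iff.mp hh).1) hpq0
      · rw [if_neg hab, if_neg hkk]
        exact mmt_vanish₁ h μ hμ
          (fun hh => hab ((Prod.ext_iff.mp hh).1).symm)
          (fun hh => hab ((Prod.ext_iff.mp hh).1).symm)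
          (fun hh => hkk ((Prod.ext_iff.mp hh).2).symm)
  have hSsum : ∑ a : Fin d, ∑ b : Fin d, ∑ k : Fin M, ∑ k' : Fin M,
      mmt h μ (a,k) (b,k) (b,k') (a,k') =
      (d:ℂ) * ((M:ℂ) * c0 + (M:ℂ) * ((M:ℂ) - 1) * c1) +
        (d:ℂ) * ((d:ℂ) - 1) * ((M:ℂ) * c2) := by
    rw [Finset.sum_congr rfl fun a _ => Finset.sum_congr rfl fun b _ =>
      Finset.sum_congr rfl fun k _ => Finset.sum_congr rfl fun k' _ => hterm a b k k']
    have hinner1 : (∑ k : Fin M, ∑ k' : Fin M, if k = k' then c0 else c1) =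
        (M:ℂ) * c0 + (M:ℂ) * ((M:ℂ) - 1) * c1 := by
      rw [sum_ite_pair]
      simp [Fintype.card_fin]
    have hinner2 : (∑ k : Fin M, ∑ k' : Fin M, if k = k' then c2 else (0:ℂ)) = (M:ℂ) * c2 := by
      rw [Finset.sum_congr rfl fun k _ => Finset.sum_ite_eq Finset.univ k (fun _ => c2)]
      simp [Finset.card_univ, mul_comm]
    have houter : ∀ a b : Fin d, (∑ k : Fin M, ∑ k' : Fin M,
        if a = b then (if k = k' then c0 else c1) else (if k = k' then c2 else 0)) =
        if a = b then ((M:ℂ) * c0 + (M:ℂ) * ((M:ℂ) - 1) * c1) else ((M:ℂ) * c2) := by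
      intro a b
      by_cases hab : a = b
      · simp only [if_pos hab]
        exact hinner1
      · simp only [if_neg hab]
        exact hinner2
    rw [Finset.sum_congr rfl fun a _ => Finset.sum_congr rfl fun b _ => houter a b,
      sum_ite_pair]
    simp only [Fintype.card_fin]
    try ring
  have hM0 : (M:ℂ) ≠ 0 := Nat.cast_ne_zero.mpr hM.ne'
  have hN0 : N ≠ 0 := by rw [hN]; exact mul_ne_zero hd0 hM0
  have hN1 : N - 1 ≠ 0 := by
    rw [hN]
    intro hh
    have h3 : ((d * M : ℕ) : ℂ) = ((1 : ℕ) : ℂ) := by push_cast; linear_combination hh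
    have h4 : d * M = 1 := Nat.cast_injective h3
    omega
  have hN1' : N + 1 ≠ 0 := by
    rw [hN]
    intro hh
    have h3 : ((d * M + 1 : ℕ) : ℂ) = 0 := by push_cast; linear_combination hh
    exact Nat.cast_ne_zero.mpr (Nat.succ_ne_zero _) h3
  have hc0' : N * (N + 1) * c0 = (d:ℂ)^2 + (d:ℂ) := by
    linear_combination E1 + E2 + (N * (N - 1)) * E3
  have hc1' : N * ((N - 1) * (N + 1)) * c1 = (d:ℂ)^2 * N - (d:ℂ) := by
    linear_combination (N + 1) * E1 - hc0'
  have hc2' : N * ((N - 1) * (N + 1)) * c2 = (d:ℂ) * N - (d:ℂ)^2 := by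
    linear_combination (N + 1) * E2 - hc0'
  rw [hN] at hc0' hc1' hc2' hN0 hN1 hN1'
  have hQD : (d:ℂ)^2 * (M:ℂ)^2 - 1 ≠ 0 := by
    intro hh
    exact (mul_ne_zero hN1 hN1') (by linear_combination hh)
  have hDD : (d:ℂ) * ((d:ℂ)^2 * (M:ℂ)^2 - 1) ≠ 0 := mul_ne_zero hd0 hQD
  have hSval : (d:ℂ) * ((M:ℂ) * c0 + (M:ℂ) * ((M:ℂ) - 1) * c1) +
      (d:ℂ) * ((d:ℂ) - 1) * ((M:ℂ) * c2) =
      ((d:ℂ)^3 * (M:ℂ)^2 + (d:ℂ)^3 * (M:ℂ) - (d:ℂ)^3 - (d:ℂ) * (M:ℂ)) /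
        ((d:ℂ)^2 * (M:ℂ)^2 - 1) := by
    rw [eq_div_iff hQD]
    linear_combination ((d:ℂ) * (M:ℂ) - 1) * hc0' + ((M:ℂ) - 1) * hc1' + ((d:ℂ) - 1) * hc2'
  have hpart1 : ∫ U, ((stinespringChannel d d M h U ((d : ℂ)⁻¹ • 1) - (d : ℂ)⁻¹ • 1) *
        (stinespringChannel d d M h U ((d : ℂ)⁻¹ • 1) - (d : ℂ)⁻¹ • 1)).trace ∂μ =
      ((d : ℂ) ^ 2 - 1) * ((M : ℂ) - 1) /
        ((d : ℂ) * ((d : ℂ) ^ 2 * (M : ℂ) ^ 2 - 1)) := by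
    rw [hint, hSsum, hSval, hc, eq_div_iff hDD]
    have hR1 : (d:ℂ)⁻¹ * (d:ℂ) = 1 := inv_mul_cancel₀ hd0
    have hR2 : ((d:ℂ)^2*(M:ℂ)^2 - 1)⁻¹ * ((d:ℂ)^2*(M:ℂ)^2 - 1) = 1 := inv_mul_cancel₀ hQD
    linear_combination ((d:ℂ)⁻¹ * ((d:ℂ)^3*(M:ℂ)^2 + (d:ℂ)^3*(M:ℂ) - (d:ℂ)^3 - (d:ℂ)*(M:ℂ)) +
      ((d:ℂ)^2*(M:ℂ)^2 + (d:ℂ)^2*(M:ℂ) - (d:ℂ)^2 - (M:ℂ)) - ((d:ℂ)^2*(M:ℂ)^2 - 1)) * hR1 +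
      ((d:ℂ)⁻¹^2 * ((d:ℂ)^3*(M:ℂ)^2 + (d:ℂ)^3*(M:ℂ) - (d:ℂ)^3 - (d:ℂ)*(M:ℂ)) * (d:ℂ)) * hR2
  refine ⟨hpart1, ?_⟩
  intro t ht hMt
  subst hMt
  rw [hpart1]
  have hcast : ((t * d^2 : ℕ) : ℂ) = (t:ℂ) * (d:ℂ)^2 := by push_cast; ring
  rw [hcast]
  congr 1
  ring
end
end
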